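/- arXiv:1403.4621 — 10 statements merged into one kernel-verified Lean document; each statement's English description precedes it below -/
import Mathlib

section
/- If P(a₁,...,aₙ|x₁,...,xₙ) is a quantum distribution, i.e., there exist Hilbert spaces H₁,...,Hₙ, a normalized state |φ⟩ ∈ ⊗ₖHₖ and projections E_k^{a,x} on Hₖ with Σ_a E_k^{a,x} = 1 and P(ā|x̄) = ⟨φ| ⊗ₖ E_k^{a_k,x_k} |φ⟩, then P is almost quantum: there exist a single Hilbert space H, a normalized state |φ⟩ ∈ H and projections Ẽ_k^{a,x} on H satisfying (i) Σ_a Ẽ_k^{a,x} = 1 for all x,k, (ii) Ẽ₁^{a₁,x₁}···Ẽₙ^{aₙ,xₙ}|φ⟩ is invariant under permuting the party order, and (iii) P(ā|x̄) = ⟨φ| ∏ₖ Ẽ_k^{a_k,x_k} |φ⟩. -/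
/-- Ordered product of operators applied to a vector:
`seqApply T v = T 0 (T 1 (... (T (n-1) v)))`, i.e. `(∏ₖ Tₖ) v` in party order. -/
def seqApply {H : Type*} [AddCommMonoid H] [Module ℂ H] {n : ℕ}
    (T : Fin n → (H →ₗ[ℂ] H)) (v : H) : H :=
  (List.ofFn T).foldr (fun f w => f w) v

/-- An almost quantum representation of an `n`-partite distribution `P` (Definition 1 of the
paper): a Hilbert space, a normalized state `φ` and projections `E k a x` (one complete family
per party `k` and input `x`) such that ordered products applied to `φ` are invariant under
permutations of the parties and reproduce the probabilities. -/
structure AQRep {n : ℕ} {A X : Type*} [Fintype A]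
    (P : (Fin n → A) → (Fin n → X) → ℝ) where
  H : Type
  [instN : NormedAddCommGroup H]
  [instI : InnerProductSpace ℂ H]
  φ : H
  E : Fin n → A → X → (H →ₗ[ℂ] H)
  norm_φ : ‖φ‖ = 1
  idem : ∀ k a x, E k a x ∘ₗ E k a x = E k a x
  selfAdj : ∀ k a x (v w : H), (inner ℂ ((E k a x) v) w : ℂ) = inner ℂ v ((E k a x) w)
  complete : ∀ k x, ∑ a, E k a x = (LinearMap.id : H →ₗ[ℂ] H)
  perm : ∀ (a : Fin n → A) (x : Fin n → X) (π : Equiv.Perm (Fin n)),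
    seqApply (fun i => E (π i) (a (π i)) (x (π i))) φ = seqApply (fun i => E i (a i) (x i)) φ
  prob : ∀ a x, (P a x : ℂ) = inner ℂ φ (seqApply (fun i => E i (a i) (x i)) φ)

/-- `P` is almost quantum iff it admits an almost quantum representation. -/
def IsAlmostQuantum {n : ℕ} {A X : Type*} [Fintype A]
    (P : (Fin n → A) → (Fin n → X) → ℝ) : Prop :=
  Nonempty (AQRep P)

theorem seqApply_eq_prod {H : Type*} [AddCommMonoid H] [Module ℂ H] {n : ℕ}
    (T : Fin n → Module.End ℂ H) (v : H) : seqApply T v = (List.ofFn T).prod v := by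
  unfold seqApply
  induction List.ofFn T with
  | nil => rfl
  | cons f l ih => simp [ih]

theorem seqApply_comp_perm {H : Type*} [AddCommMonoid H] [Module ℂ H] {n : ℕ}
    (T : Fin n → Module.End ℂ H) (hT : Pairwise fun i j => Commute (T i) (T j))
    (π : Equiv.Perm (Fin n)) (v : H) : seqApply (T ∘ π) v = seqApply T v := by
  have hpairwise : (List.ofFn (T ∘ π)).Pairwise Commute :=
    List.pairwise_ofFn.mpr fun _ _ hij => hT (π.injective.ne hij.ne)
  rw [seqApply_eq_prod, seqApply_eq_prod, (Equiv.Perm.ofFn_comp_perm π T).prod_eq' hpairwise]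

/-- every quantum distribution is almost quantum.  A quantum distribution is
given by a normalized state `φ` and, for each party, a complete family of projections, where
projections of *different* parties commute (this captures the tensor-product local structure
`Ẽₖ = 1 ⊗ ... ⊗ Eₖ ⊗ ... ⊗ 1`). -/
theorem quantum_implies_almost_quantum
    {n : ℕ} {A X : Type*} [Fintype A]
    (P : (Fin n → A) → (Fin n → X) → ℝ)
    (H : Type) [NormedAddCommGroup H] [InnerProductSpace ℂ H]
    (φ : H) (hφ : ‖φ‖ = 1)
    (E : Fin n → A → X → (H →ₗ[ℂ] H))
    (hidem : ∀ k a x, E k a x ∘ₗ E k a x = E k a x)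
    (hsa : ∀ k a x (v w : H), (inner ℂ ((E k a x) v) w : ℂ) = inner ℂ v ((E k a x) w))
    (hcomplete : ∀ k x, ∑ a, E k a x = (LinearMap.id : H →ₗ[ℂ] H))
    (hcomm : ∀ k k', k ≠ k' → ∀ a x a' x',
      E k a x ∘ₗ E k' a' x' = E k' a' x' ∘ₗ E k a x)
    (hP : ∀ a x, (P a x : ℂ) = inner ℂ φ (seqApply (fun i => E i (a i) (x i)) φ)) :
    IsAlmostQuantum P := by
  refine ⟨⟨H, φ, E, hφ, hidem, hsa, hcomplete, fun a x π => ?_, hP⟩⟩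
  exact seqApply_comp_perm (fun i => E i (a i) (x i))
    (fun i j hij => hcomm i j hij (a i) (x i) (a j) (x j)) π φ
end

section
/- Almost quantum distributions satisfy Local Orthogonality: if P is an n-partite almost quantum distribution and E is a set of pairwise locally orthogonal events (events e = (ā|x̄) on subsets of parties, where e ⊥ e' iff there is a common party k with x_k = x_k' and a_k ≠ a_k'), then Σ_{e∈E} P(e) ≤ 1. -/
/-!
Write `v e = ∏_{k∈e} E_k^{a_k,x_k} φ` for the vector of an event `e`. Since the parties of an
event are distinct, permutation invariance lets any of its projectors be moved to the front,
where idempotence absorbs it: `E v e = v e`. Self-adjointness then gives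
`P(e) = ⟨φ, v e⟩ = ⟨v e, v e⟩`, and for locally orthogonal events the two clashing projectors
meet and annihilate each other, so `⟨v e, v e'⟩ = 0`. Hence `S = ∑ v e` satisfies
`‖S‖² = Re ⟨φ, S⟩ ≤ ‖S‖`, i.e. `∑ P(e) = ‖S‖² ≤ 1`.
-/

variable {n : ℕ} {A X : Type*}

/-- Apply a list of (party, outcome, input) projectors to a vector, in order. -/
def applyList {H : Type*} [AddCommMonoid H] [Module ℂ H]
    (E : Fin n → A → X → (H →ₗ[ℂ] H)) (L : List (Fin n × A × X)) (v : H) : H :=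
  L.foldr (fun t w => E t.1 t.2.1 t.2.2 w) v

/-- The list of (party, outcome, input) triples of an event, where an event assigns to
each party that measures an (outcome, input) pair, and `none` to parties that do not
measure. -/
def evList (e : Fin n → Option (A × X)) : List (Fin n × A × X) :=
  (List.finRange n).filterMap fun k => (e k).map fun p => (k, p.1, p.2)

/-- Two events are locally orthogonal iff some common measuring party uses the same input
but obtains different outcomes. -/
def LocOrth (e e' : Fin n → Option (A × X)) : Prop :=
  ∃ k a a' x, e k = some (a, x) ∧ e' k = some (a', x) ∧ a ≠ a'

open scoped InnerProductSpace

section orthogonalSum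

variable {𝕜 F : Type*} [RCLike 𝕜] [NormedAddCommGroup F] [InnerProductSpace 𝕜 F]

theorem inner_sum_sum_self_of_pairwise_orthogonal {ι : Type*} [Fintype ι] {v : ι → F}
    (horth : Pairwise fun i j => ⟪v i, v j⟫_𝕜 = 0) :
    ⟪∑ i, v i, ∑ i, v i⟫_𝕜 = ∑ i, ⟪v i, v i⟫_𝕜 := by
  classical
  rw [sum_inner]
  refine Finset.sum_congr rfl fun i _ => ?_
  rw [inner_sum, Finset.sum_eq_single i (fun j _ hji => horth hji.symm)
    (fun hi => absurd (Finset.mem_univ i) hi)]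

theorem sum_re_inner_le_norm_sq_of_pairwise_orthogonal {ι : Type*} [Fintype ι] (φ : F)
    {v : ι → F} (horth : Pairwise fun i j => ⟪v i, v j⟫_𝕜 = 0)
    (hproj : ∀ i, ⟪φ, v i⟫_𝕜 = ⟪v i, v i⟫_𝕜) :
    ∑ i, RCLike.re ⟪φ, v i⟫_𝕜 ≤ ‖φ‖ ^ 2 := by
  set S := ∑ i, v i
  have hS : ⟪φ, S⟫_𝕜 = ⟪S, S⟫_𝕜 := by
    rw [inner_sum, inner_sum_sum_self_of_pairwise_orthogonal horth]
    exact Finset.sum_congr rfl fun i _ => hproj i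
  have hre : RCLike.re ⟪φ, S⟫_𝕜 = ‖S‖ ^ 2 := by
    rw [hS, inner_self_eq_norm_sq]
  have hcs : RCLike.re ⟪φ, S⟫_𝕜 ≤ ‖φ‖ * ‖S‖ := re_inner_le_norm φ S
  rw [← map_sum, ← inner_sum]
  nlinarith [norm_nonneg φ, norm_nonneg S]

end orthogonalSum

theorem mem_evList {e : Fin n → Option (A × X)} {k : Fin n} {a : A} {x : X}
    (h : e k = some (a, x)) : (k, a, x) ∈ evList e := by
  simp only [evList, List.mem_filterMap]
  exact ⟨k, List.mem_finRange k, by simp [h]⟩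

theorem nodup_map_fst_evList (e : Fin n → Option (A × X)) :
    ((evList e).map Prod.fst).Nodup := by
  rw [evList, List.map_filterMap]
  refine List.Nodup.filterMap ?_ (List.nodup_finRange n)
  intro k k' _ hk hk'
  simp only [Option.map_map] at hk hk'
  obtain ⟨_, _, rfl⟩ := Option.map_eq_some_iff.1 hk
  obtain ⟨_, _, h⟩ := Option.map_eq_some_iff.1 hk'
  exact h.symm

def PermInvariantAt {H : Type*} [AddCommMonoid H] [Module ℂ H]
    (E : Fin n → A → X → (H →ₗ[ℂ] H)) (φ : H) : Prop :=
  ∀ L L' : List (Fin n × A × X), L.Perm L' → (L.map Prod.fst).Nodup →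
    applyList E L φ = applyList E L' φ

section applyList

variable {H : Type*} [NormedAddCommGroup H] [InnerProductSpace ℂ H]
  {E : Fin n → A → X → (H →ₗ[ℂ] H)} {φ : H}

@[simp]
theorem applyList_cons (t : Fin n × A × X) (L : List (Fin n × A × X)) (v : H) :
    applyList E (t :: L) v = E t.1 t.2.1 t.2.2 (applyList E L v) := rfl

theorem PermInvariantAt.exists_applyList_eq_apply (hperm : PermInvariantAt E φ)
    {L : List (Fin n × A × X)} (hL : (L.map Prod.fst).Nodup) {t : Fin n × A × X} (ht : t ∈ L) :
    ∃ L' : List (Fin n × A × X), applyList E L φ = E t.1 t.2.1 t.2.2 (applyList E L' φ) := by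
  classical
  exact ⟨L.erase t, hperm _ _ (List.perm_cons_erase ht) hL⟩

theorem PermInvariantAt.apply_applyList_of_mem (hperm : PermInvariantAt E φ)
    (hidem : ∀ k a x, E k a x ∘ₗ E k a x = E k a x)
    {L : List (Fin n × A × X)} (hL : (L.map Prod.fst).Nodup) {t : Fin n × A × X} (ht : t ∈ L) :
    E t.1 t.2.1 t.2.2 (applyList E L φ) = applyList E L φ := by
  obtain ⟨L', hL'⟩ := hperm.exists_applyList_eq_apply hL ht
  rw [hL', ← LinearMap.comp_apply, hidem]

theorem PermInvariantAt.inner_applyList_of_subset (hperm : PermInvariantAt E φ)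
    (hidem : ∀ k a x, E k a x ∘ₗ E k a x = E k a x)
    (hsa : ∀ k a x (v w : H), ⟪E k a x v, w⟫_ℂ = ⟪v, E k a x w⟫_ℂ)
    {L : List (Fin n × A × X)} (hL : (L.map Prod.fst).Nodup) :
    ∀ {L' : List (Fin n × A × X)}, L' ⊆ L →
      ⟪applyList E L' φ, applyList E L φ⟫_ℂ = ⟪φ, applyList E L φ⟫_ℂ
  | [], _ => rfl
  | t :: L', hsub => by
    rw [applyList_cons, hsa, hperm.apply_applyList_of_mem hidem hL (hsub List.mem_cons_self)]
    exact hperm.inner_applyList_of_subset hidem hsa hL (List.subset_of_cons_subset hsub)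

theorem PermInvariantAt.inner_applyList_evList_of_locOrth (hperm : PermInvariantAt E φ)
    (horth : ∀ k a a' x, a ≠ a' → E k a x ∘ₗ E k a' x = 0)
    (hsa : ∀ k a x (v w : H), ⟪E k a x v, w⟫_ℂ = ⟪v, E k a x w⟫_ℂ)
    {e e' : Fin n → Option (A × X)} (h : LocOrth e e') :
    ⟪applyList E (evList e) φ, applyList E (evList e') φ⟫_ℂ = 0 := by
  obtain ⟨k, a, a', x, hk, hk', hne⟩ := h
  obtain ⟨L, hL⟩ := hperm.exists_applyList_eq_apply (nodup_map_fst_evList e) (mem_evList hk)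
  obtain ⟨L', hL'⟩ := hperm.exists_applyList_eq_apply (nodup_map_fst_evList e') (mem_evList hk')
  rw [hL, hL', hsa, ← LinearMap.comp_apply, horth k a a' x hne, LinearMap.zero_apply,
    inner_zero_right]

end applyList

theorem almostQuantum_satisfies_localOrthogonality_general
    {H : Type*} [NormedAddCommGroup H] [InnerProductSpace ℂ H]
    (φ : H) (hφ : ‖φ‖ = 1)
    (E : Fin n → A → X → (H →ₗ[ℂ] H))
    (hidem : ∀ k a x, E k a x ∘ₗ E k a x = E k a x)
    (horth : ∀ k a a' x, a ≠ a' → E k a x ∘ₗ E k a' x = 0)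
    (hsa : ∀ k a x (v w : H), (inner ℂ ((E k a x) v) w : ℂ) = inner ℂ v ((E k a x) w))
    (hperm : ∀ L L' : List (Fin n × A × X), L.Perm L' → (L.map Prod.fst).Nodup →
      applyList E L φ = applyList E L' φ)
    {m : ℕ} (ev : Fin m → (Fin n → Option (A × X)))
    (hLO : ∀ i j, i ≠ j → LocOrth (ev i) (ev j)) :
    ∑ i, ((inner ℂ φ (applyList E (evList (ev i)) φ) : ℂ)).re ≤ 1 := by
  have hproj : ∀ i, ⟪φ, applyList E (evList (ev i)) φ⟫_ℂ =
      ⟪applyList E (evList (ev i)) φ, applyList E (evList (ev i)) φ⟫_ℂ := fun i =>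
    (PermInvariantAt.inner_applyList_of_subset hperm hidem hsa (nodup_map_fst_evList (ev i))
      (List.Subset.refl _)).symm
  have hpairwise : Pairwise fun i j =>
      ⟪applyList E (evList (ev i)) φ, applyList E (evList (ev j)) φ⟫_ℂ = 0 := fun i j hij =>
    PermInvariantAt.inner_applyList_evList_of_locOrth hperm horth hsa (hLO i j hij)
  simpa [hφ] using sum_re_inner_le_norm_sq_of_pairwise_orthogonal φ hpairwise hproj

/-- almost quantum distributions satisfy Local Orthogonality.  Given an
almost quantum representation (`φ`, `E`) — with the permutation-invariance property stated
for arbitrary products of projectors of distinct parties applied to `φ` — and any finite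
family of pairwise locally orthogonal events, the sum of the event probabilities
`P(e) = ⟨φ|∏_{k∈e} E_k^{a_k,x_k}|φ⟩` is at most 1. -/
theorem almostQuantum_satisfies_localOrthogonality
    [Fintype A] {H : Type*} [NormedAddCommGroup H] [InnerProductSpace ℂ H]
    (φ : H) (hφ : ‖φ‖ = 1)
    (E : Fin n → A → X → (H →ₗ[ℂ] H))
    (hidem : ∀ k a x, E k a x ∘ₗ E k a x = E k a x)
    (horth : ∀ k a a' x, a ≠ a' → E k a x ∘ₗ E k a' x = 0)
    (hsa : ∀ k a x (v w : H), (inner ℂ ((E k a x) v) w : ℂ) = inner ℂ v ((E k a x) w))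
    (hcomplete : ∀ k x, ∑ a, E k a x = (LinearMap.id : H →ₗ[ℂ] H))
    (hperm : ∀ L L' : List (Fin n × A × X), L.Perm L' → (L.map Prod.fst).Nodup →
      applyList E L φ = applyList E L' φ)
    {m : ℕ} (ev : Fin m → (Fin n → Option (A × X)))
    (hLO : ∀ i j, i ≠ j → LocOrth (ev i) (ev j)) :
    ∑ i, ((inner ℂ φ (applyList E (evList (ev i)) φ) : ℂ)).re ≤ 1 :=
  almostQuantum_satisfies_localOrthogonality_general φ hφ E hidem horth hsa hperm ev hLO
end

section
/- For any two locally orthogonal events e = (ā|x̄) and e' = (ā'|x̄') of an almost quantum representation, the associated vectors |e⟩ = ∏_k E_k^{a_k,x_k}|φ⟩ and |e'⟩ = ∏_k E_k^{a'_k,x'_k}|φ⟩ satisfy ⟨e|e'⟩ = 0. -/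
/-!
Local orthogonality gives a party `k` whose projections `P = E_k^{a_k,x_k}` and
`Q = E_k^{a'_k,x_k}` satisfy `P Q = 0`. Reordering the parties puts `k` first, so that
`|e⟩ = P ψ` and `|e'⟩ = Q ψ'`, and then `⟨P ψ, Q ψ'⟩ = ⟨ψ, P Q ψ'⟩ = 0`.
-/

lemma LinearMap.IsSymmetric.inner_apply_eq_zero_of_comp_eq_zero {𝕜 H : Type*} [RCLike 𝕜]
    [NormedAddCommGroup H] [InnerProductSpace 𝕜 H] {P Q : H →ₗ[𝕜] H} (hP : P.IsSymmetric)
    (hPQ : P ∘ₗ Q = 0) (v w : H) : inner 𝕜 (P v) (Q w) = 0 := by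
  rw [hP, ← LinearMap.comp_apply, hPQ, LinearMap.zero_apply, inner_zero_right]

section seqApply

variable {H : Type*} [AddCommMonoid H] [Module ℂ H]

lemma seqApply_succ {m : ℕ} (T : Fin (m + 1) → (H →ₗ[ℂ] H)) (v : H) :
    seqApply T v = T 0 (seqApply (fun i => T i.succ) v) := by
  simp [seqApply, List.ofFn_succ]

lemma exists_seqApply_eq_apply_of_perm_invariant {n : ℕ} (T : Fin n → (H →ₗ[ℂ] H)) (v : H)
    (hT : ∀ π : Equiv.Perm (Fin n), seqApply (T ∘ π) v = seqApply T v) (k : Fin n) :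
    ∃ w, seqApply T v = T k w := by
  cases n with
  | zero => exact k.elim0
  | succ m =>
    refine ⟨seqApply (fun i => T (Equiv.swap 0 k i.succ)) v, ?_⟩
    rw [← hT (Equiv.swap 0 k), seqApply_succ]
    simp only [Function.comp_apply, Equiv.swap_apply_left]

end seqApply

theorem locally_orthogonal_events_vectors_orthogonal_general
    {n : ℕ} {A X : Type*}
    {H : Type*} [NormedAddCommGroup H] [InnerProductSpace ℂ H]
    (φ : H) (E : Fin n → A → X → (H →ₗ[ℂ] H))
    (horth : ∀ k a a' x, a ≠ a' → E k a x ∘ₗ E k a' x = 0)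
    (hsa : ∀ k a x (v w : H), (inner ℂ ((E k a x) v) w : ℂ) = inner ℂ v ((E k a x) w))
    (hperm : ∀ (a : Fin n → A) (x : Fin n → X) (π : Equiv.Perm (Fin n)),
      seqApply (fun i => E (π i) (a (π i)) (x (π i))) φ =
        seqApply (fun i => E i (a i) (x i)) φ)
    (a a' : Fin n → A) (x x' : Fin n → X)
    (hLO : ∃ k, x k = x' k ∧ a k ≠ a' k) :
    (inner ℂ (seqApply (fun i => E i (a i) (x i)) φ)
      (seqApply (fun i => E i (a' i) (x' i)) φ) : ℂ) = 0 := by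
  obtain ⟨k, hx, ha⟩ := hLO
  obtain ⟨w, hw⟩ := exists_seqApply_eq_apply_of_perm_invariant
    (fun i => E i (a i) (x i)) φ (hperm a x) k
  obtain ⟨w', hw'⟩ := exists_seqApply_eq_apply_of_perm_invariant
    (fun i => E i (a' i) (x' i)) φ (hperm a' x') k
  rw [hw, hw', ← hx]
  exact LinearMap.IsSymmetric.inner_apply_eq_zero_of_comp_eq_zero (hsa k (a k) (x k))
    (horth k _ _ _ ha) w w'

/-- for any two locally orthogonal events `e = (ā|x̄)`, `e' = (ā'|x̄')`
(i.e. some party `k` has `x_k = x'_k` but `a_k ≠ a'_k`) of an almost quantum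
representation, the vectors `|e⟩ = ∏ₖ E_k^{a_k,x_k}|φ⟩` and `|e'⟩ = ∏ₖ E_k^{a'_k,x'_k}|φ⟩`
are orthogonal. -/
theorem locally_orthogonal_events_vectors_orthogonal
    {n : ℕ} {A X : Type*}
    {H : Type*} [NormedAddCommGroup H] [InnerProductSpace ℂ H]
    (φ : H) (E : Fin n → A → X → (H →ₗ[ℂ] H))
    (hidem : ∀ k a x, E k a x ∘ₗ E k a x = E k a x)
    (horth : ∀ k a a' x, a ≠ a' → E k a x ∘ₗ E k a' x = 0)
    (hsa : ∀ k a x (v w : H), (inner ℂ ((E k a x) v) w : ℂ) = inner ℂ v ((E k a x) w))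
    (hperm : ∀ (a : Fin n → A) (x : Fin n → X) (π : Equiv.Perm (Fin n)),
      seqApply (fun i => E (π i) (a (π i)) (x (π i))) φ =
        seqApply (fun i => E i (a i) (x i)) φ)
    (a a' : Fin n → A) (x x' : Fin n → X)
    (hLO : ∃ k, x k = x' k ∧ a k ≠ a' k) :
    (inner ℂ (seqApply (fun i => E i (a i) (x i)) φ)
      (seqApply (fun i => E i (a' i) (x' i)) φ) : ℂ) = 0 :=
  locally_orthogonal_events_vectors_orthogonal_general φ E horth hsa hperm a a' x x' hLO
end

section
/- The set of almost quantum distributions is closed under post-selection: if P(a₁,...,aₙ|x₁,...,xₙ) is almost quantum and P(a₁|x₁) > 0, then the conditional distribution P(a₂,...,aₙ|x₁,...,xₙ,a₁) := P(a₁,...,aₙ|x̄)/P(a₁|x₁) is an almost quantum (n−1)-partite distribution. -/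
theorem List.foldr_apply_eq_prod_apply {R M : Type*} [Semiring R] [AddCommMonoid M] [Module R M]
    (l : List (M →ₗ[R] M)) (v : M) :
    l.foldr (fun f w => f w) v = l.prod v := by
  induction l with
  | nil => rfl
  | cons f l ih => simp [ih]

theorem seqApply_eq_prod_apply {H : Type*} [AddCommMonoid H] [Module ℂ H] {n : ℕ}
    (T : Fin n → (H →ₗ[ℂ] H)) (v : H) :
    seqApply T v = (List.ofFn T).prod v :=
  List.foldr_apply_eq_prod_apply _ _

theorem sum_prod_ofFn_eq_one {R ι : Type*} [Semiring R] [Fintype ι] {m : ℕ}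
    (F : Fin m → ι → R) (hF : ∀ k, ∑ a, F k a = 1) :
    ∑ a : Fin m → ι, (List.ofFn fun k => F k (a k)).prod = 1 := by
  induction m with
  | zero => simp
  | succ m ih =>
    rw [← (Fin.consEquiv fun _ => ι).sum_comp, Fintype.sum_prod_type]
    simp only [Fin.consEquiv_apply, List.ofFn_succ, Fin.cons_zero, Fin.cons_succ, List.prod_cons,
      ← Finset.mul_sum, ih _ fun k => hF k.succ, mul_one, hF 0]

theorem Fin.exists_perm_comp_eq_snoc {α : Type*} {n : ℕ} (f : Fin (n + 1) → α)
    (π : Equiv.Perm (Fin n)) :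
    ∃ σ : Equiv.Perm (Fin (n + 1)), f ∘ σ = Fin.snoc (fun i => f (π i).succ) (f 0) := by
  refine ⟨(finRotate (n + 1)).trans (Equiv.Perm.decomposeFin.symm (0, π)), funext fun j => ?_⟩
  refine Fin.lastCases ?_ (fun i => ?_) j <;> simp

theorem seqApply_smul {H : Type*} [AddCommMonoid H] [Module ℂ H] {n : ℕ}
    (T : Fin n → (H →ₗ[ℂ] H)) (c : ℂ) (v : H) :
    seqApply T (c • v) = c • seqApply T v := by
  simp only [seqApply_eq_prod_apply, map_smul]

theorem seqApply_cons {H : Type*} [AddCommMonoid H] [Module ℂ H] {n : ℕ}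
    (T : Fin (n + 1) → (H →ₗ[ℂ] H)) (v : H) :
    seqApply T v = T 0 (seqApply (fun i => T i.succ) v) := by
  simp only [seqApply_eq_prod_apply, List.ofFn_succ, List.prod_cons, Module.End.mul_apply]

theorem seqApply_snoc {H : Type*} [AddCommMonoid H] [Module ℂ H] {n : ℕ}
    (T : Fin n → (H →ₗ[ℂ] H)) (S : H →ₗ[ℂ] H) (v : H) :
    seqApply (Fin.snoc T S) v = seqApply T (S v) := by
  rw [seqApply_eq_prod_apply, seqApply_eq_prod_apply, List.ofFn_succ']
  simp [Module.End.mul_apply]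

theorem LinearMap.IsSymmetric.inner_map_map_of_idem {𝕜 E : Type*} [RCLike 𝕜]
    [NormedAddCommGroup E] [InnerProductSpace 𝕜 E] {T : E →ₗ[𝕜] E} (hT : T.IsSymmetric)
    (hT2 : T ∘ₗ T = T) (v w : E) :
    inner 𝕜 (T v) (T w) = inner 𝕜 v (T w) := by
  rw [hT, ← LinearMap.comp_apply, hT2]

namespace AQRep

attribute [local instance] instN instI

variable {n : ℕ} {A X : Type*} [Fintype A] {P : (Fin (n + 1) → A) → (Fin (n + 1) → X) → ℝ}
  (R : AQRep P) (a₁ : A) (x₁ : X)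

theorem seqApply_succ_perm (π : Equiv.Perm (Fin n)) (a : Fin n → A) (x : Fin n → X) :
    seqApply (fun i => R.E (π i).succ (a (π i)) (x (π i))) (R.E 0 a₁ x₁ R.φ) =
      seqApply (fun j => R.E j ((Fin.cons a₁ a : Fin (n + 1) → A) j)
        ((Fin.cons x₁ x : Fin (n + 1) → X) j)) R.φ := by
  obtain ⟨σ, hσ⟩ := Fin.exists_perm_comp_eq_snoc
    (fun j => R.E j ((Fin.cons a₁ a : Fin (n + 1) → A) j) ((Fin.cons x₁ x : Fin (n + 1) → X) j)) π
  rw [← R.perm _ _ σ]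
  exact (seqApply_snoc _ _ _).symm.trans (congrArg (seqApply · R.φ) hσ.symm)

theorem sum_prob_cons (x : Fin n → X) :
    ∑ a, P (Fin.cons a₁ a) (Fin.cons x₁ x) = ‖R.E 0 a₁ x₁ R.φ‖ ^ 2 := by
  have hsum : ∑ a : Fin n → A, seqApply (fun i => R.E i.succ (a i) (x i)) R.φ = R.φ := by
    simp only [seqApply_eq_prod_apply, ← LinearMap.sum_apply]
    rw [sum_prod_ofFn_eq_one _ fun k => R.complete k.succ (x k)]
    rfl
  apply Complex.ofReal_injective
  push_cast
  simp only [R.prob, seqApply_cons, Fin.cons_zero, Fin.cons_succ, ← inner_sum, ← map_sum, hsum]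
  rw [← LinearMap.IsSymmetric.inner_map_map_of_idem (R.selfAdj 0 a₁ x₁) (R.idem 0 a₁ x₁),
    inner_self_eq_norm_sq_to_K]
  rfl

theorem seqApply_succ (a : Fin n → A) (x : Fin n → X) :
    seqApply (fun i => R.E i.succ (a i) (x i)) (R.E 0 a₁ x₁ R.φ) =
      seqApply (fun j => R.E j ((Fin.cons a₁ a : Fin (n + 1) → A) j)
        ((Fin.cons x₁ x : Fin (n + 1) → X) j)) R.φ :=
  R.seqApply_succ_perm a₁ x₁ (Equiv.refl _) a x

theorem inner_proj_seqApply_succ (a : Fin n → A) (x : Fin n → X) :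
    inner ℂ (R.E 0 a₁ x₁ R.φ) (seqApply (fun i => R.E i.succ (a i) (x i)) (R.E 0 a₁ x₁ R.φ)) =
      P (Fin.cons a₁ a) (Fin.cons x₁ x) := by
  rw [R.seqApply_succ, R.prob, seqApply_cons]
  exact LinearMap.IsSymmetric.inner_map_map_of_idem (R.selfAdj 0 a₁ x₁) (R.idem 0 a₁ x₁) _ _

noncomputable def postselect (h : R.E 0 a₁ x₁ R.φ ≠ 0) :
    AQRep fun (a : Fin n → A) (x : Fin n → X) =>
      P (Fin.cons a₁ a) (Fin.cons x₁ x) / ‖R.E 0 a₁ x₁ R.φ‖ ^ 2 where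
  H := R.H
  φ := (‖R.E 0 a₁ x₁ R.φ‖ : ℂ)⁻¹ • R.E 0 a₁ x₁ R.φ
  E k := R.E k.succ
  norm_φ := by simp [norm_smul, norm_ne_zero_iff.mpr h]
  idem k := R.idem k.succ
  selfAdj k := R.selfAdj k.succ
  complete k := R.complete k.succ
  perm a x π := by
    simp only [seqApply_smul, R.seqApply_succ_perm a₁ x₁ π, R.seqApply_succ]
  prob a x := by
    rw [seqApply_smul, inner_smul_left, inner_smul_right, R.inner_proj_seqApply_succ]
    simp only [map_inv₀, Complex.conj_ofReal]
    push_cast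
    field_simp

end AQRep

/-- the almost quantum set is closed under post-selection.  If the
`(n+1)`-partite distribution `P` is almost quantum, `marg a₁ x₁` is the marginal
probability that party 1 obtains outcome `a₁` on input `x₁` (well defined by
no-signalling), and `marg a₁ x₁ > 0`, then the conditional distribution of the remaining
`n` parties given party 1's input `x₁` and outcome `a₁` is almost quantum. -/
theorem almostQuantum_closed_postselection
    {n : ℕ} {A X : Type*} [Fintype A]
    (P : (Fin (n + 1) → A) → (Fin (n + 1) → X) → ℝ)
    (hP : IsAlmostQuantum P)
    (marg : A → X → ℝ)
    (hmarg : ∀ (a₁ : A) (x₁ : X) (x : Fin n → X),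
      ∑ a : Fin n → A, P (Fin.cons a₁ a) (Fin.cons x₁ x) = marg a₁ x₁)
    (a₁ : A) (x₁ : X) (hpos : 0 < marg a₁ x₁) :
    IsAlmostQuantum (fun (a : Fin n → A) (x : Fin n → X) =>
      P (Fin.cons a₁ a) (Fin.cons x₁ x) / marg a₁ x₁) := by
  obtain ⟨R⟩ := hP
  let := R.instN
  have hmarg_eq : marg a₁ x₁ = ‖R.E 0 a₁ x₁ R.φ‖ ^ 2 := by
    rw [← hmarg a₁ x₁ fun _ => x₁, R.sum_prob_cons]
  have hproj : R.E 0 a₁ x₁ R.φ ≠ 0 := by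
    rw [← norm_ne_zero_iff, ← pow_ne_zero_iff two_ne_zero, ← hmarg_eq]
    exact hpos.ne'
  rw [hmarg_eq]
  exact ⟨R.postselect a₁ x₁ hproj⟩
end

section
/- The set of almost quantum distributions is closed under composition: if P_A is an n_A-partite almost quantum distribution and P_B is an n_B-partite almost quantum distribution, then the product distribution (ā,b̄ | x̄,ȳ) ↦ P_A(ā|x̄)·P_B(b̄|ȳ) is an (n_A+n_B)-partite almost quantum distribution. -/
/-! Represent the composite box on `H_A ⊗ H_B`, with the first `n_A` parties acting as `E ⊗ 1`
and the last `n_B` as `1 ⊗ F`, on the state `φ_A ⊗ φ_B`. Since each operator acts on one leg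
only, an ordered product of them applied to `φ_A ⊗ φ_B` factors as the product of the `E`'s in
their induced order applied to `φ_A`, tensored with that of the `F`'s applied to `φ_B`.
Permutation invariance of each factor gives that of the composite, and the inner product of
pure tensors gives `P_A · P_B`. -/

open scoped TensorProduct

theorem List.exists_perm_ofFn_eq {n : ℕ} {l : List (Fin n)} (hnd : l.Nodup)
    (hmem : ∀ i, i ∈ l) : ∃ σ : Equiv.Perm (Fin n), List.ofFn σ = l := by
  have hlen : l.length = n := by
    simpa using
      ((List.perm_ext_iff_of_nodup hnd (List.nodup_finRange n)).2 (by simp [hmem])).length_eq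
  refine ⟨(finCongr hlen).symm.trans (hnd.getEquivOfForallMemList l hmem), ?_⟩
  apply List.ext_get (by simp [hlen])
  intro i _ _
  simp [List.Nodup.getEquivOfForallMemList]

theorem List.Nodup.filterMap_getLeft {α β : Type*} {L : List (α ⊕ β)} (h : L.Nodup) :
    (L.filterMap Sum.getLeft?).Nodup :=
  h.filterMap (by rintro (a | a) (b | b) c <;> simp_all)

theorem List.Nodup.filterMap_getRight {α β : Type*} {L : List (α ⊕ β)} (h : L.Nodup) :
    (L.filterMap Sum.getRight?).Nodup :=
  h.filterMap (by rintro (a | a) (b | b) c <;> simp_all)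

theorem foldr_map_sumElim_rTensor_lTensor_tmul {R HA HB ι κ : Type*} [CommSemiring R]
    [AddCommMonoid HA] [Module R HA] [AddCommMonoid HB] [Module R HB] (fA : ι → HA →ₗ[R] HA)
    (fB : κ → HB →ₗ[R] HB) (L : List (ι ⊕ κ)) (u : HA) (v : HB) :
    (L.map (Sum.elim (fun i => (fA i).rTensor HB) (fun j => (fB j).lTensor HA))).foldr
        (fun f w => f w) (u ⊗ₜ v) =
      ((L.filterMap Sum.getLeft?).map fA).foldr (fun f w => f w) u ⊗ₜ
        ((L.filterMap Sum.getRight?).map fB).foldr (fun f w => f w) v := by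
  induction L with
  | nil => rfl
  | cons s L ih => cases s <;> simp [ih, List.filterMap_cons]

namespace LinearMap.IsSymmetric

variable {𝕜 E F : Type*} [RCLike 𝕜] [NormedAddCommGroup E] [InnerProductSpace 𝕜 E]
  [NormedAddCommGroup F] [InnerProductSpace 𝕜 F] {f : E →ₗ[𝕜] E} {g : F →ₗ[𝕜] F}

theorem tensorMap (hf : f.IsSymmetric) (hg : g.IsSymmetric) :
    (TensorProduct.map f g).IsSymmetric := by
  intro x y
  induction x using TensorProduct.induction_on with
  | zero => simp
  | add x₁ x₂ h₁ h₂ => simp only [map_add, inner_add_left, h₁, h₂]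
  | tmul u v =>
    induction y using TensorProduct.induction_on with
    | zero => simp
    | add y₁ y₂ h₁ h₂ => simp only [map_add, inner_add_right, h₁, h₂]
    | tmul u' v' => simp [hf u u', hg v v']

theorem rTensor (hf : f.IsSymmetric) : (f.rTensor F).IsSymmetric :=
  hf.tensorMap IsSymmetric.id

theorem lTensor (hg : g.IsSymmetric) : (g.lTensor E).IsSymmetric :=
  IsSymmetric.id.tensorMap hg

end LinearMap.IsSymmetric

theorem seqApply_comp_perm_tmul {nA nB : ℕ} {HA HB : Type*} [AddCommMonoid HA] [Module ℂ HA]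
    [AddCommMonoid HB] [Module ℂ HB] {T : Fin (nA + nB) → HA ⊗[ℂ] HB →ₗ[ℂ] HA ⊗[ℂ] HB}
    {fA : Fin nA → HA →ₗ[ℂ] HA} {fB : Fin nB → HB →ₗ[ℂ] HB} {u : HA} {v : HB}
    (hTA : ∀ i, T (Fin.castAdd nB i) = (fA i).rTensor HB)
    (hTB : ∀ j, T (Fin.natAdd nA j) = (fB j).lTensor HA)
    (hA : ∀ σ : Equiv.Perm (Fin nA), seqApply (fun i => fA (σ i)) u = seqApply fA u)
    (hB : ∀ σ : Equiv.Perm (Fin nB), seqApply (fun j => fB (σ j)) v = seqApply fB v)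
    (π : Equiv.Perm (Fin (nA + nB))) :
    seqApply (T ∘ π) (u ⊗ₜ v) = seqApply fA u ⊗ₜ seqApply fB v := by
  have hT : T = Sum.elim (fun i => (fA i).rTensor HB) (fun j => (fB j).lTensor HA) ∘
      finSumFinEquiv.symm :=
    funext (Fin.addCases (by simp [hTA]) (by simp [hTB]))
  set L := List.ofFn (finSumFinEquiv.symm ∘ π)
  have hL : L.Nodup := List.nodup_ofFn.2 (finSumFinEquiv.symm.injective.comp π.injective)
  have hLmem : ∀ s, s ∈ L := fun s =>
    List.mem_ofFn.2 (finSumFinEquiv.symm.surjective.comp π.surjective s)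
  obtain ⟨σA, hσA⟩ := List.exists_perm_ofFn_eq hL.filterMap_getLeft (by simp [hLmem])
  obtain ⟨σB, hσB⟩ := List.exists_perm_ofFn_eq hL.filterMap_getRight (by simp [hLmem])
  calc seqApply (T ∘ π) (u ⊗ₜ v)
      = (L.map (Sum.elim (fun i => (fA i).rTensor HB) (fun j => (fB j).lTensor HA))).foldr
          (fun f w => f w) (u ⊗ₜ v) := by
        rw [seqApply, hT, List.map_ofFn]; rfl
    _ = seqApply (fun i => fA (σA i)) u ⊗ₜ seqApply (fun j => fB (σB j)) v := by
        rw [foldr_map_sumElim_rTensor_lTensor_tmul, ← hσA, ← hσB, List.map_ofFn, List.map_ofFn]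
        rfl
    _ = seqApply fA u ⊗ₜ seqApply fB v := by rw [hA, hB]

attribute [instance] AQRep.instN AQRep.instI

namespace AQRep

variable {nA nB : ℕ} {A X : Type*} [Fintype A]
  {PA : (Fin nA → A) → (Fin nA → X) → ℝ} {PB : (Fin nB → A) → (Fin nB → X) → ℝ}

noncomputable def tensorE (RA : AQRep PA) (RB : AQRep PB) (k : Fin (nA + nB)) (a : A) (x : X) :
    RA.H ⊗[ℂ] RB.H →ₗ[ℂ] RA.H ⊗[ℂ] RB.H :=
  Fin.addCases (motive := fun _ => RA.H ⊗[ℂ] RB.H →ₗ[ℂ] RA.H ⊗[ℂ] RB.H)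
    (fun i => (RA.E i a x).rTensor RB.H) (fun j => (RB.E j a x).lTensor RA.H) k

variable (RA : AQRep PA) (RB : AQRep PB)

@[simp] theorem tensorE_castAdd (i : Fin nA) (a : A) (x : X) :
    RA.tensorE RB (Fin.castAdd nB i) a x = (RA.E i a x).rTensor RB.H :=
  Fin.addCases_left i

@[simp] theorem tensorE_natAdd (j : Fin nB) (a : A) (x : X) :
    RA.tensorE RB (Fin.natAdd nA j) a x = (RB.E j a x).lTensor RA.H :=
  Fin.addCases_right j

theorem seqApply_tensorE (a : Fin (nA + nB) → A) (x : Fin (nA + nB) → X)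
    (π : Equiv.Perm (Fin (nA + nB))) :
    seqApply (fun k => RA.tensorE RB (π k) (a (π k)) (x (π k))) (RA.φ ⊗ₜ RB.φ) =
      seqApply (fun i => RA.E i (a (Fin.castAdd nB i)) (x (Fin.castAdd nB i))) RA.φ ⊗ₜ
        seqApply (fun j => RB.E j (a (Fin.natAdd nA j)) (x (Fin.natAdd nA j))) RB.φ :=
  seqApply_comp_perm_tmul (T := fun k => RA.tensorE RB k (a k) (x k)) (by simp) (by simp)
    (RA.perm (fun i => a (Fin.castAdd nB i)) (fun i => x (Fin.castAdd nB i)))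
    (RB.perm (fun j => a (Fin.natAdd nA j)) (fun j => x (Fin.natAdd nA j))) π

noncomputable def tensor : AQRep (fun (a : Fin (nA + nB) → A) (x : Fin (nA + nB) → X) =>
      PA (fun i => a (Fin.castAdd nB i)) (fun i => x (Fin.castAdd nB i)) *
        PB (fun j => a (Fin.natAdd nA j)) (fun j => x (Fin.natAdd nA j))) where
  H := RA.H ⊗[ℂ] RB.H
  φ := RA.φ ⊗ₜ RB.φ
  E := RA.tensorE RB
  norm_φ := by simp [RA.norm_φ, RB.norm_φ]
  idem k a x := by
    induction k using Fin.addCases <;>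
      simp [← LinearMap.rTensor_comp, ← LinearMap.lTensor_comp, RA.idem, RB.idem]
  selfAdj k a x := by
    induction k using Fin.addCases
    · simp only [tensorE_castAdd]
      exact LinearMap.IsSymmetric.rTensor (RA.selfAdj _ a x)
    · simp only [tensorE_natAdd]
      exact LinearMap.IsSymmetric.lTensor (RB.selfAdj _ a x)
  complete k x := by
    induction k using Fin.addCases
    · simp only [tensorE_castAdd, ← LinearMap.coe_rTensorHom, ← map_sum, RA.complete]
      exact LinearMap.rTensor_id _ _
    · simp only [tensorE_natAdd, ← LinearMap.coe_lTensorHom, ← map_sum, RB.complete]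
      exact LinearMap.lTensor_id _ _
  perm a x π := (RA.seqApply_tensorE RB a x π).trans (RA.seqApply_tensorE RB a x 1).symm
  prob a x := by
    have h : seqApply (fun k => RA.tensorE RB k (a k) (x k)) (RA.φ ⊗ₜ RB.φ) = _ :=
      RA.seqApply_tensorE RB a x 1
    simp [h, RA.prob, RB.prob]

end AQRep

/-- the almost quantum set is closed under composition: the product of two
independent almost quantum boxes (on `n_A` and `n_B` parties respectively) is an
`(n_A + n_B)`-partite almost quantum box. -/
theorem almostQuantum_closed_composition
    {nA nB : ℕ} {A X : Type*} [Fintype A]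
    (PA : (Fin nA → A) → (Fin nA → X) → ℝ)
    (PB : (Fin nB → A) → (Fin nB → X) → ℝ)
    (hA : IsAlmostQuantum PA) (hB : IsAlmostQuantum PB) :
    IsAlmostQuantum (fun (a : Fin (nA + nB) → A) (x : Fin (nA + nB) → X) =>
      PA (fun i => a (Fin.castAdd nB i)) (fun i => x (Fin.castAdd nB i)) *
        PB (fun j => a (Fin.natAdd nA j)) (fun j => x (Fin.natAdd nA j))) := by
  obtain ⟨RA⟩ := hA
  obtain ⟨RB⟩ := hB
  exact ⟨RA.tensor RB⟩
end

section
/- (Non-signalling guessing bound) Let P(ā,c̄|x̄,z̄) be a non-signalling bipartite distribution where Alice's input x̄ and Bob's output c̄ are n-bit strings, and Alice's output ā and Bob's input z̄ are m-bit strings. Then (1/2ⁿ) Σ_{x̄∈{0,1}ⁿ} Σ_{ā∈{0,1}ᵐ} P(ā, x̄ | x̄, ā) ≤ 2^{m−n}. -/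
/-- non-signalling guessing bound: for a non-signalling bipartite
distribution `P ā c̄ x̄ z̄` (Alice: input `x̄ ∈ {0,1}ⁿ`, output `ā ∈ {0,1}ᵐ`; Bob: input
`z̄ ∈ {0,1}ᵐ`, output `c̄ ∈ {0,1}ⁿ`), the probability that Bob outputs Alice's uniformly
random input when his input equals her output is at most `2^{m-n}`:
`(1/2ⁿ) Σ_x̄ Σ_ā P(ā, x̄ | x̄, ā) ≤ 2^m / 2^n`. -/
theorem nonsignalling_guessing_bound {n m : ℕ}
    (P : (Fin m → Bool) → (Fin n → Bool) → (Fin n → Bool) → (Fin m → Bool) → ℝ)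
    (hpos : ∀ a c x z, 0 ≤ P a c x z)
    (hnorm : ∀ x z, ∑ a : Fin m → Bool, ∑ c : Fin n → Bool, P a c x z = 1)
    (hnsA : ∀ a x z z', ∑ c : Fin n → Bool, P a c x z = ∑ c : Fin n → Bool, P a c x z')
    (hnsB : ∀ c z x x', ∑ a : Fin m → Bool, P a c x z = ∑ a : Fin m → Bool, P a c x' z) :
    (1 / 2 ^ n) * ∑ x : Fin n → Bool, ∑ a : Fin m → Bool, P a x x a ≤
      (2 : ℝ) ^ m / 2 ^ n := by
  have key : ∑ x : Fin n → Bool, ∑ a : Fin m → Bool, P a x x a ≤ (2 : ℝ) ^ m := by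
    rw [Finset.sum_comm]
    have h1 : ∀ a : Fin m → Bool, ∑ x : Fin n → Bool, P a x x a ≤ 1 := by
      intro a
      set x0 : Fin n → Bool := fun _ => false
      calc ∑ x : Fin n → Bool, P a x x a
          ≤ ∑ x : Fin n → Bool, ∑ a' : Fin m → Bool, P a' x x a := by
            apply Finset.sum_le_sum
            intro x _
            exact Finset.single_le_sum (fun a' _ => hpos a' x x a) (Finset.mem_univ a)
        _ = ∑ x : Fin n → Bool, ∑ a' : Fin m → Bool, P a' x x0 a := by
            exact Finset.sum_congr rfl fun x _ => hnsB x a x x0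
        _ = 1 := by rw [Finset.sum_comm]; exact hnorm x0 a
    calc ∑ a : Fin m → Bool, ∑ x : Fin n → Bool, P a x x a
        ≤ ∑ _a : Fin m → Bool, (1 : ℝ) := Finset.sum_le_sum fun a _ => h1 a
      _ = (2 : ℝ) ^ m := by simp [Finset.card_univ]
  calc (1 / 2 ^ n) * ∑ x : Fin n → Bool, ∑ a : Fin m → Bool, P a x x a
      ≤ (1 / 2 ^ n) * (2:ℝ) ^ m := by
        apply mul_le_mul_of_nonneg_left key; positivity
    _ = (2:ℝ) ^ m / 2 ^ n := by ring
end

section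
/- If the worst-case success probability p of computing the inner product x̄·ȳ (mod 2) of two n-bit strings with m bits of one-way communication using almost quantum boxes satisfies the consequences of Lemmas 2 and 3 of the paper, then 2^{m−n} ≥ (2p−1)². In particular, for fixed m and p > 1/2, taking n large enough gives a contradiction, so almost quantum correlations have non-trivial communication complexity. -/
/-- Inner product of two bit strings, mod 2, as a Bool. -/
def ip {n : ℕ} (x y : Fin n → Bool) : Bool :=
  (Finset.univ.filter fun i => x i && y i).card % 2 == 1

/-- non-trivial communication complexity: suppose Alice and Bob compute the
inner product `x̄·ȳ (mod 2)` of two `n`-bit strings with `m` bits of one-way communication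
using an almost quantum box `P ā b x̄ z̄ ȳ` with worst-case success probability `p > 1/2`
(hypothesis `h1`); `w ā x̄` is Alice's marginal (hypothesis `hw`).  Assuming the
consequences of Lemma 2 (`h2`: there is a non-signalling box `P'` whose guessing
probability dominates the average squared bias, where `P(success|x̄,ā) =
2^{-n} Σ_ȳ P(b = x̄·ȳ | x̄, ā, [ā,ȳ])`) and of Lemma 3 (`h3`: the non-signalling guessing
bound), we get `2^{m-n} ≥ (2p-1)²`; hence for fixed `m` and `p > 1/2` no fixed amount of
communication works for all `n`. -/
theorem almostQuantum_nontrivial_communication_complexity {n m : ℕ} (p : ℝ)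
    (hp : 1 / 2 < p)
    (P : (Fin m → Bool) → Bool → (Fin n → Bool) → (Fin m → Bool) → (Fin n → Bool) → ℝ)
    (w : (Fin m → Bool) → (Fin n → Bool) → ℝ)
    (P' : (Fin m → Bool) → (Fin n → Bool) → (Fin n → Bool) → (Fin m → Bool) → ℝ)
    (hwpos : ∀ a x, 0 < w a x)
    (hwnorm : ∀ x, ∑ a : Fin m → Bool, w a x = 1)
    (hw : ∀ a x z y, ∑ b : Bool, P a b x z y = w a x)
    (h1 : ∀ x y, p ≤ ∑ a : Fin m → Bool, P a (ip x y) x a y)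
    (h2 : ∀ x, ∑ a : Fin m → Bool,
        w a x * (2 * ((1 / 2 ^ n) * ∑ y : Fin n → Bool, P a (ip x y) x a y / w a x) - 1) ^ 2
      ≤ ∑ a : Fin m → Bool, P' a x x a)
    (h3 : (1 / 2 ^ n) * ∑ x : Fin n → Bool, ∑ a : Fin m → Bool, P' a x x a ≤
      (2 : ℝ) ^ m / 2 ^ n) :
    (2 * p - 1) ^ 2 ≤ (2 : ℝ) ^ m / 2 ^ n := by
  -- For each x, the key bound (2p-1)^2 ≤ ∑_a P' a x x a
  have key : ∀ x : Fin n → Bool, (2 * p - 1) ^ 2 ≤ ∑ a : Fin m → Bool, P' a x x a := by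
    intro x
    set t : (Fin m → Bool) → ℝ := fun a =>
      2 * ((1 / 2 ^ n) * ∑ y : Fin n → Bool, P a (ip x y) x a y / w a x) - 1 with ht
    -- average bias
    have hsum : ∑ a : Fin m → Bool, w a x * t a
        = 2 * (1 / 2 ^ n) * ∑ y : Fin n → Bool, ∑ a : Fin m → Bool, P a (ip x y) x a y - 1 := by
      have : ∀ a : Fin m → Bool, w a x * t a
          = 2 * (1 / 2 ^ n) * ∑ y : Fin n → Bool, P a (ip x y) x a y - w a x := by
        intro a
        have hw0 := (hwpos a x).ne'
        rw [ht]
        simp only [← Finset.sum_div]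
        field_simp
      rw [Finset.sum_congr rfl fun a _ => this a, Finset.sum_sub_distrib, hwnorm,
        ← Finset.mul_sum, Finset.sum_comm]
    have hbias : 2 * p - 1 ≤ ∑ a : Fin m → Bool, w a x * t a := by
      rw [hsum]
      have hcard : (Finset.univ : Finset (Fin n → Bool)).card = 2 ^ n := by
        simp [Finset.card_univ]
      have hs : (2 : ℝ) ^ n * p ≤ ∑ y : Fin n → Bool, ∑ a : Fin m → Bool, P a (ip x y) x a y := by
        calc (2 : ℝ) ^ n * p = ∑ _y : Fin n → Bool, p := by
              rw [Finset.sum_const, hcard]; push_cast; ring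
          _ ≤ _ := Finset.sum_le_sum fun y _ => h1 x y
      have hc : (0 : ℝ) < 1 / 2 ^ n := by positivity
      have hinv : (1 / (2 : ℝ) ^ n) * 2 ^ n = 1 := by field_simp
      nlinarith [mul_le_mul_of_nonneg_left hs hc.le, hinv]
    -- Cauchy–Schwarz (Jensen)
    have hcs : (∑ a : Fin m → Bool, w a x * t a) ^ 2
        ≤ ∑ a : Fin m → Bool, w a x * t a ^ 2 := by
      have := Finset.sum_sq_le_sum_mul_sum_of_sq_eq_mul (Finset.univ : Finset (Fin m → Bool))
        (r := fun a => w a x * t a) (f := fun a => w a x) (g := fun a => w a x * t a ^ 2)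
        (fun a _ => (hwpos a x).le) (fun a _ => mul_nonneg (hwpos a x).le (sq_nonneg _))
        (fun a _ => by ring)
      simpa [hwnorm x] using this
    have hpos : 0 ≤ 2 * p - 1 := by linarith
    calc (2 * p - 1) ^ 2 ≤ (∑ a : Fin m → Bool, w a x * t a) ^ 2 := by
          apply pow_le_pow_left₀ hpos hbias
      _ ≤ ∑ a : Fin m → Bool, w a x * t a ^ 2 := hcs
      _ ≤ ∑ a : Fin m → Bool, P' a x x a := h2 x
  -- average over x
  have hcard : (Finset.univ : Finset (Fin n → Bool)).card = 2 ^ n := by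
    simp [Finset.card_univ]
  have h2n : (0 : ℝ) < 2 ^ n := by positivity
  have : (2 * p - 1) ^ 2 ≤ (1 / 2 ^ n) * ∑ x : Fin n → Bool, ∑ a : Fin m → Bool, P' a x x a := by
    have hs : (2 : ℝ) ^ n * (2 * p - 1) ^ 2
        ≤ ∑ x : Fin n → Bool, ∑ a : Fin m → Bool, P' a x x a := by
      calc (2 : ℝ) ^ n * (2 * p - 1) ^ 2 = ∑ _x : Fin n → Bool, (2 * p - 1) ^ 2 := by
            rw [Finset.sum_const, hcard]; push_cast; ring
        _ ≤ _ := Finset.sum_le_sum fun x _ => key x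
    have hc : (0 : ℝ) < 1 / 2 ^ n := by positivity
    have hinv : (1 / (2 : ℝ) ^ n) * 2 ^ n = 1 := by field_simp
    nlinarith [mul_le_mul_of_nonneg_left hs hc.le, hinv]
  linarith [h3]
end

section
/- Every bipartite almost quantum distribution satisfies Macroscopic Locality: if P(a,b|x,y) admits an almost quantum certificate Γ, then the submatrix γ of Γ indexed by {φ} ∪ {(a|x): a≠0} ∪ {(b|y): b≠0} is positive semidefinite and satisfies γ_{(a,x),(a',x)} = P(a|x)δ_{a,a'}, γ_{(a,x),(b,y)} = P(a,b|x,y), γ_{(b,y),(b',y)} = P(b|y)δ_{b,b'}, γ_{φ,(a|x)} = P(a|x), γ_{φ,(b|y)} = P(b|y), and γ_{φ,φ} = 1; i.e., P ∈ Q¹. -/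
/-- Bipartite events with nonzero outcomes: `A`, `B` are the types of *nonzero* outcomes
of Alice and Bob, `X`, `Y` their inputs.  An event is a pair (possibly-absent Alice event
`(a|x)`, possibly-absent Bob event `(b|y)`); `(none, none)` is the null event `φ`. -/
abbrev BipEv (A X B Y : Type*) := Option (A × X) × Option (B × Y)

/-- Index set `{φ} ∪ {(a|x)} ∪ {(b|y)}` of the macroscopic-locality (NPA level 1) moment
matrix. -/
abbrev Q1Idx (A X B Y : Type*) := Option (A × X ⊕ B × Y)

/-- Embedding of the `Q¹` index set into the set of bipartite events. -/
def q1Emb {A X B Y : Type*} : Q1Idx A X B Y → BipEv A X B Y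
  | none => (none, none)
  | some (Sum.inl ax) => (some ax, none)
  | some (Sum.inr bY) => (none, some bY)

/-- every bipartite almost quantum distribution satisfies Macroscopic
Locality.  If `Γ` is an almost quantum certificate for the bipartite distribution with
marginals `PA`, `PB` and joint `Pj` (positive semidefinite, normalized, vanishing on
locally orthogonal pairs, first row giving the probabilities, and satisfying the
consistency conditions), then the submatrix `γ` of `Γ` indexed by
`{φ} ∪ {(a|x)} ∪ {(b|y)}` is positive semidefinite and has the `Q¹` (NPA level 1) moment
structure; i.e. `P ∈ Q¹`. -/
theorem almostQuantum_satisfies_macroscopicLocality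
    {A X B Y : Type*} [Fintype A] [Fintype X] [Fintype B] [Fintype Y]
    [DecidableEq A] [DecidableEq X] [DecidableEq B] [DecidableEq Y]
    (PA : A → X → ℝ) (PB : B → Y → ℝ) (Pj : A → B → X → Y → ℝ)
    (Γ : Matrix (BipEv A X B Y) (BipEv A X B Y) ℝ)
    (hPSD : Γ.PosSemidef)
    (hunit : Γ (none, none) (none, none) = 1)
    (hLOa : ∀ a a' x, a ≠ a' → ∀ β β' : Option (B × Y),
      Γ (some (a, x), β) (some (a', x), β') = 0)
    (hLOb : ∀ b b' y, b ≠ b' → ∀ α α' : Option (A × X),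
      Γ (α, some (b, y)) (α', some (b', y)) = 0)
    (hPA : ∀ a x, Γ (none, none) (some (a, x), none) = PA a x)
    (hPB : ∀ b y, Γ (none, none) (none, some (b, y)) = PB b y)
    (hPj : ∀ a b x y, Γ (none, none) (some (a, x), some (b, y)) = Pj a b x y)
    (hconsA : ∀ a x (β β' : Option (B × Y)),
      Γ (some (a, x), β) (some (a, x), β') = Γ (none, β) (some (a, x), β') ∧
        Γ (some (a, x), β) (some (a, x), β') = Γ (some (a, x), β) (none, β'))
    (hconsB : ∀ b y (α α' : Option (A × X)),
      Γ (α, some (b, y)) (α', some (b, y)) = Γ (α, none) (α', some (b, y)) ∧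
        Γ (α, some (b, y)) (α', some (b, y)) = Γ (α, some (b, y)) (α', none)) :
    (Γ.submatrix q1Emb q1Emb).PosSemidef ∧
      (Γ.submatrix q1Emb q1Emb) none none = 1 ∧
      (∀ a a' x, (Γ.submatrix q1Emb q1Emb) (some (Sum.inl (a, x))) (some (Sum.inl (a', x)))
        = if a = a' then PA a x else 0) ∧
      (∀ b b' y, (Γ.submatrix q1Emb q1Emb) (some (Sum.inr (b, y))) (some (Sum.inr (b', y)))
        = if b = b' then PB b y else 0) ∧
      (∀ a b x y, (Γ.submatrix q1Emb q1Emb) (some (Sum.inl (a, x))) (some (Sum.inr (b, y)))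
        = Pj a b x y) ∧
      (∀ a x, (Γ.submatrix q1Emb q1Emb) none (some (Sum.inl (a, x))) = PA a x) ∧
      (∀ b y, (Γ.submatrix q1Emb q1Emb) none (some (Sum.inr (b, y))) = PB b y) := by
  refine ⟨hPSD.submatrix q1Emb, hunit, ?_, ?_, ?_, ?_, ?_⟩
  · intro a a' x
    simp only [Matrix.submatrix_apply, q1Emb]
    by_cases h : a = a'
    · subst h
      rw [if_pos rfl, (hconsA a x none none).1, hPA]
    · rw [if_neg h, hLOa a a' x h]
  · intro b b' y
    simp only [Matrix.submatrix_apply, q1Emb]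
    by_cases h : b = b'
    · subst h
      rw [if_pos rfl, (hconsB b y none none).1, hPB]
    · rw [if_neg h, hLOb b b' y h]
  · intro a b x y
    simp only [Matrix.submatrix_apply, q1Emb]
    rw [← (hconsA a x none (some (b, y))).2, (hconsA a x none (some (b, y))).1, hPj]
  · intro a x
    simpa [Matrix.submatrix_apply, q1Emb] using hPA a x
  · intro b y
    simpa [Matrix.submatrix_apply, q1Emb] using hPB b y
end

section
/- (No Advantage for Nonlocal Computation for Q¹, modulo the classical bound) Let P(a,b|x,y) ∈ Q¹ with binary outcomes, witnessed by unit vectors |φ⟩, |a,x⟩, |b,y⟩ with ⟨a,x|a',x⟩ = P(a|x)δ_{aa'}, ⟨b,y|b',y⟩ = P(b|y)δ_{bb'}, ⟨a,x|b,y⟩ = P(a,b|x,y). Then the average success probability P_{Q¹}(f) = 2^{−n} Σ_{x,y} p̃(x⊕y) P(a⊕b = f(x⊕y)|x,y) satisfies P_{Q¹}(f) ≤ (1 + ‖Φ‖)/2, where Φ = Σ_{x,y} (−1)^{f(x⊕y)} p̃(x⊕y) |x⟩⟨y| and ‖·‖ is the operator norm. -/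
/-!
Put `u x = |false,x⟩ - |true,x⟩` and `v y = |false,y⟩ - |true,y⟩`. Orthogonality of the outcome
vectors makes these unit vectors, and `⟪u x, v y⟫` is the correlator `E(x,y)` of `(-1)^(a ⊕ b)`,
so the success probability equals `(1 + 2⁻ⁿ Σ_{x,y} Φ x y E(x,y)) / 2`. A bilinear form
`Σ_{x,y} M x y ⟪u x, v y⟫` in Hilbert-space vectors is at most
`‖M‖ (Σ ‖u x‖²)^½ (Σ ‖v y‖²)^½`: in an orthonormal basis `(e_k)` of the span of the vectors it
is `Σ_k ⟪A_k, M B_k⟫` with `A_k x = ⟪e_k, u x⟫`, `B_k y = ⟪e_k, v y⟫`, and Cauchy–Schwarz over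
`k` finishes.
-/

open Finset
open scoped InnerProductSpace

/-- The matrix `Φ = Σ_{x,y} (−1)^{f(x⊕y)} p̃(x⊕y) |x⟩⟨y|` of the nonlocal-computation
argument. -/
noncomputable def PhiMat {n : ℕ} (f : (Fin n → Bool) → Bool)
    (pt : (Fin n → Bool) → ℝ) : Matrix (Fin n → Bool) (Fin n → Bool) ℝ :=
  fun x y => (if f (fun i => xor (x i) (y i)) then -1 else 1) * pt (fun i => xor (x i) (y i))

section BilinearBound

variable {ι : Type*} {H : Type*} [NormedAddCommGroup H] [InnerProductSpace ℝ H]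

theorem Matrix.sum_sum_mul_mul_le_opNorm [Fintype ι] [DecidableEq ι] (M : Matrix ι ι ℝ)
    (a b : EuclideanSpace ℝ ι) :
    ∑ x, ∑ y, M x y * a x * b y ≤
      ‖LinearMap.toContinuousLinearMap (Matrix.toEuclideanLin M)‖ * ‖a‖ * ‖b‖ := by
  set T := LinearMap.toContinuousLinearMap (Matrix.toEuclideanLin M)
  have hform : ∑ x, ∑ y, M x y * a x * b y = ⟪a, T b⟫_ℝ := by
    simp only [T, PiLp.inner_apply, LinearMap.coe_toContinuousLinearMap', Matrix.ofLp_toLpLin,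
      Matrix.toLin'_apply, Matrix.mulVec, dotProduct, RCLike.inner_apply, conj_trivial, sum_mul]
    exact sum_congr rfl fun x _ => sum_congr rfl fun y _ => by ring
  calc ∑ x, ∑ y, M x y * a x * b y = ⟪a, T b⟫_ℝ := hform
    _ ≤ ‖a‖ * ‖T b‖ := real_inner_le_norm _ _
    _ ≤ ‖a‖ * (‖T‖ * ‖b‖) := by gcongr; exact T.le_opNorm b
    _ = ‖T‖ * ‖a‖ * ‖b‖ := by ring

variable {κ : Type*} [Fintype κ]

noncomputable def OrthonormalBasis.coordVec (b : OrthonormalBasis κ ℝ H) (w : ι → H) (k : κ) :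
    EuclideanSpace ℝ ι :=
  WithLp.toLp 2 fun x => b.repr (w x) k

theorem OrthonormalBasis.inner_eq_sum_coordVec (b : OrthonormalBasis κ ℝ H) (u v : ι → H)
    (x y : ι) : ⟪u x, v y⟫_ℝ = ∑ k, b.coordVec u k x * b.coordVec v k y := by
  rw [← b.repr.inner_map_map, PiLp.inner_apply]
  simp [coordVec, mul_comm]

theorem OrthonormalBasis.sum_norm_sq_coordVec [Fintype ι] (b : OrthonormalBasis κ ℝ H)
    (w : ι → H) : ∑ k, ‖b.coordVec w k‖ ^ 2 = ∑ x, ‖w x‖ ^ 2 := by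
  simp_rw [EuclideanSpace.norm_sq_eq, ← b.repr.norm_map (w _), EuclideanSpace.norm_sq_eq]
  exact sum_comm

theorem Matrix.sum_sum_mul_inner_le_of_finiteDimensional [Fintype ι] [DecidableEq ι]
    [FiniteDimensional ℝ H] (M : Matrix ι ι ℝ) (u v : ι → H) :
    ∑ x, ∑ y, M x y * ⟪u x, v y⟫_ℝ ≤
      ‖LinearMap.toContinuousLinearMap (Matrix.toEuclideanLin M)‖ *
        (√(∑ x, ‖u x‖ ^ 2) * √(∑ y, ‖v y‖ ^ 2)) := by
  set T := LinearMap.toContinuousLinearMap (Matrix.toEuclideanLin M)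
  set b := stdOrthonormalBasis ℝ H
  calc ∑ x, ∑ y, M x y * ⟪u x, v y⟫_ℝ
      = ∑ k, ∑ x, ∑ y, M x y * b.coordVec u k x * b.coordVec v k y := by
        simp_rw [b.inner_eq_sum_coordVec u v, mul_sum, ← mul_assoc]
        symm
        rw [sum_comm]
        exact sum_congr rfl fun x _ => sum_comm
    _ ≤ ∑ k, ‖T‖ * (‖b.coordVec u k‖ * ‖b.coordVec v k‖) := by
        gcongr with k
        exact (M.sum_sum_mul_mul_le_opNorm _ _).trans_eq (mul_assoc _ _ _)
    _ = ‖T‖ * ∑ k, ‖b.coordVec u k‖ * ‖b.coordVec v k‖ := (mul_sum _ _ _).symm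
    _ ≤ ‖T‖ * (√(∑ k, ‖b.coordVec u k‖ ^ 2) * √(∑ k, ‖b.coordVec v k‖ ^ 2)) := by
        gcongr
        exact Real.sum_mul_le_sqrt_mul_sqrt _ _ _
    _ = ‖T‖ * (√(∑ x, ‖u x‖ ^ 2) * √(∑ y, ‖v y‖ ^ 2)) := by
        rw [b.sum_norm_sq_coordVec, b.sum_norm_sq_coordVec]

theorem Matrix.sum_sum_mul_inner_le [Fintype ι] [DecidableEq ι] (M : Matrix ι ι ℝ)
    (u v : ι → H) :
    ∑ x, ∑ y, M x y * ⟪u x, v y⟫_ℝ ≤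
      ‖LinearMap.toContinuousLinearMap (Matrix.toEuclideanLin M)‖ *
        (√(∑ x, ‖u x‖ ^ 2) * √(∑ y, ‖v y‖ ^ 2)) := by
  let S := Submodule.span ℝ (Set.range u ∪ Set.range v)
  have : FiniteDimensional ℝ S :=
    FiniteDimensional.span_of_finite ℝ ((Set.finite_range u).union (Set.finite_range v))
  let u' : ι → S := fun x => ⟨u x, Submodule.subset_span (Or.inl ⟨x, rfl⟩)⟩
  let v' : ι → S := fun y => ⟨v y, Submodule.subset_span (Or.inr ⟨y, rfl⟩)⟩
  exact M.sum_sum_mul_inner_le_of_finiteDimensional u' v'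

end BilinearBound

section BinaryOutcomes

variable {H : Type*} [NormedAddCommGroup H] [InnerProductSpace ℝ H]

def correlator (p : Bool → Bool → ℝ) : ℝ :=
  ∑ a, ∑ b, (if xor a b then -1 else 1) * p a b

theorem sum_sum_ite_xor_eq (p : Bool → Bool → ℝ) (hp : ∑ a, ∑ b, p a b = 1) (c : Bool) :
    ∑ a, ∑ b, (if xor a b = c then p a b else 0) =
      (1 + (if c then -1 else 1) * correlator p) / 2 := by
  simp only [correlator, Fintype.sum_bool] at hp ⊢
  cases c
  · simp only [Bool.xor_self, Bool.xor_false, Bool.xor_true, Bool.not_false,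
      Bool.true_eq_false, Bool.false_eq_true, ↓reduceIte]
    linarith
  · simp only [Bool.xor_self, Bool.xor_false, Bool.xor_true, Bool.not_false,
      Bool.false_eq_true, ↓reduceIte]
    linarith

theorem inner_sub_sub_eq_correlator (w w' : Bool → H) :
    ⟪w false - w true, w' false - w' true⟫_ℝ = correlator fun a b => ⟪w a, w' b⟫_ℝ := by
  simp only [correlator, Fintype.sum_bool, inner_sub_left, inner_sub_right, Bool.xor_false,
    Bool.xor_true, Bool.not_false, Bool.not_true, Bool.false_eq_true, ↓reduceIte]
  ring

theorem norm_sub_eq_one_of_inner_eq_ite (w : Bool → H) (P : Bool → ℝ)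
    (hw : ∀ a a', ⟪w a, w a'⟫_ℝ = if a = a' then P a else 0) (hP : ∑ a, P a = 1) :
    ‖w false - w true‖ = 1 := by
  have hsq : ‖w false - w true‖ ^ 2 = 1 := by
    rw [← real_inner_self_eq_norm_sq]
    simp only [inner_sub_left, inner_sub_right, hw]
    simp only [Fintype.sum_bool] at hP
    simp only [↓reduceIte, Bool.true_eq_false, Bool.false_eq_true, sub_zero, zero_sub]
    linarith
  exact (pow_eq_one_iff_of_nonneg (norm_nonneg _) two_ne_zero).mp hsq

end BinaryOutcomes

theorem sum_xor_left {ι : Type*} [Fintype ι] [DecidableEq ι] {M : Type*} [AddCommMonoid M]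
    (g : (ι → Bool) → M) (x : ι → Bool) :
    ∑ y : ι → Bool, g (fun i => xor (x i) (y i)) = ∑ z, g z :=
  Fintype.sum_equiv
    (Function.Involutive.toPerm (fun y : ι → Bool => fun i => xor (x i) (y i))
      fun y => by funext i; simp) _ _ fun _ => rfl

theorem q1_no_advantage_nonlocal_computation_general
    {n : ℕ} {H : Type*} [NormedAddCommGroup H] [InnerProductSpace ℝ H]
    (va vb : Bool → (Fin n → Bool) → H)
    (PA PB : Bool → (Fin n → Bool) → ℝ)
    (Pj : Bool → Bool → (Fin n → Bool) → (Fin n → Bool) → ℝ)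
    (pt : (Fin n → Bool) → ℝ) (f : (Fin n → Bool) → Bool)
    (hga : ∀ a a' x, (inner ℝ (va a x) (va a' x) : ℝ) = if a = a' then PA a x else 0)
    (hgb : ∀ b b' y, (inner ℝ (vb b y) (vb b' y) : ℝ) = if b = b' then PB b y else 0)
    (hgab : ∀ a b x y, (inner ℝ (va a x) (vb b y) : ℝ) = Pj a b x y)
    (hPAnorm : ∀ x, ∑ a : Bool, PA a x = 1)
    (hPBnorm : ∀ y, ∑ b : Bool, PB b y = 1)
    (hjnorm : ∀ x y, ∑ a : Bool, ∑ b : Bool, Pj a b x y = 1)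
    (hptsum : ∑ z : Fin n → Bool, pt z = 1) :
    (1 / 2 ^ n) * ∑ x : Fin n → Bool, ∑ y : Fin n → Bool,
        pt (fun i => xor (x i) (y i)) *
          (∑ a : Bool, ∑ b : Bool,
            if xor a b = f (fun i => xor (x i) (y i)) then Pj a b x y else 0)
      ≤ (1 + ‖LinearMap.toContinuousLinearMap (Matrix.toEuclideanLin (PhiMat f pt))‖) / 2 := by
  set u := fun x => va false x - va true x
  set v := fun y => vb false y - vb true y
  have hu : ∀ x, ‖u x‖ = 1 := fun x =>
    norm_sub_eq_one_of_inner_eq_ite (va · x) (PA · x) (fun a a' => hga a a' x) (hPAnorm x)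
  have hv : ∀ y, ‖v y‖ = 1 := fun y =>
    norm_sub_eq_one_of_inner_eq_ite (vb · y) (PB · y) (fun b b' => hgb b b' y) (hPBnorm y)
  have hsuccess : ∀ x y, pt (fun i => xor (x i) (y i)) *
        (∑ a : Bool, ∑ b : Bool,
          if xor a b = f (fun i => xor (x i) (y i)) then Pj a b x y else 0) =
      (pt (fun i => xor (x i) (y i)) + PhiMat f pt x y * ⟪u x, v y⟫_ℝ) / 2 := by
    intro x y
    rw [sum_sum_ite_xor_eq _ (hjnorm x y),
      show ⟪u x, v y⟫_ℝ = _ from inner_sub_sub_eq_correlator (va · x) (vb · y)]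
    simp only [PhiMat, hgab]
    ring
  have hprior :
      ∑ x : Fin n → Bool, ∑ y : Fin n → Bool, pt (fun i => xor (x i) (y i)) = 2 ^ n := by
    simp [sum_xor_left, hptsum]
  have hbound := (PhiMat f pt).sum_sum_mul_inner_le u v
  simp only [hu, hv, one_pow, sum_const, card_univ, Fintype.card_fun, Fintype.card_bool,
    Fintype.card_fin, nsmul_eq_mul, mul_one, Nat.cast_pow, Nat.cast_ofNat] at hbound
  rw [Real.mul_self_sqrt (by positivity)] at hbound
  simp_rw [hsuccess, ← sum_div, sum_add_distrib, hprior]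
  field_simp
  linarith

/-- No Advantage for Nonlocal Computation for `Q¹`, modulo the classical
bound: for a binary-outcome distribution in `Q¹`, witnessed by Gram vectors `|a,x⟩`,
`|b,y⟩` and probabilities `PA`, `PB`, `Pj`, the average success probability of the
nonlocal computation of `f` with prior `p̃` is bounded by `(1 + ‖Φ‖)/2`, where `‖Φ‖` is
the operator norm of `Φ`. -/
theorem q1_no_advantage_nonlocal_computation
    {n : ℕ} {H : Type*} [NormedAddCommGroup H] [InnerProductSpace ℝ H]
    (va vb : Bool → (Fin n → Bool) → H)
    (PA PB : Bool → (Fin n → Bool) → ℝ)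
    (Pj : Bool → Bool → (Fin n → Bool) → (Fin n → Bool) → ℝ)
    (pt : (Fin n → Bool) → ℝ) (f : (Fin n → Bool) → Bool)
    (hga : ∀ a a' x, (inner ℝ (va a x) (va a' x) : ℝ) = if a = a' then PA a x else 0)
    (hgb : ∀ b b' y, (inner ℝ (vb b y) (vb b' y) : ℝ) = if b = b' then PB b y else 0)
    (hgab : ∀ a b x y, (inner ℝ (va a x) (vb b y) : ℝ) = Pj a b x y)
    (hPAnorm : ∀ x, ∑ a : Bool, PA a x = 1)
    (hPBnorm : ∀ y, ∑ b : Bool, PB b y = 1)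
    (hjnorm : ∀ x y, ∑ a : Bool, ∑ b : Bool, Pj a b x y = 1)
    (hpt : ∀ z, 0 ≤ pt z) (hptsum : ∑ z : Fin n → Bool, pt z = 1) :
    (1 / 2 ^ n) * ∑ x : Fin n → Bool, ∑ y : Fin n → Bool,
        pt (fun i => xor (x i) (y i)) *
          (∑ a : Bool, ∑ b : Bool,
            if xor a b = f (fun i => xor (x i) (y i)) then Pj a b x y else 0)
      ≤ (1 + ‖LinearMap.toContinuousLinearMap (Matrix.toEuclideanLin (PhiMat f pt))‖) / 2 :=
  q1_no_advantage_nonlocal_computation_general va vb PA PB Pj pt f hga hgb hgab hPAnorm hPBnorm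
    hjnorm hptsum
end

section
/- Consider the 8-dimensional parametrization p̄ of a two-party, two-input, two-output non-signalling distribution by (P₁(1|0), P₁(1|1), P₂(1|0), P₂(1|1), P(1,1|0,0), P(1,1|1,0), P(1,1|0,1), P(1,1|1,1)). For the Bell functional B(p̄) = b̄·p̄ with b̄ = (−30/31, 167/9, 167/9, −30/31, −174/11, −244/23, 74/11, −174/11): for all quantum distributions of the form generated by projectors E₁ = |1⟩⟨1|⊗1, E₁' = |ψ₁⟩⟨ψ₁|⊗1, E₂ = 1⊗|1⟩⟨1|, E₂' = 1⊗|ψ₂⟩⟨ψ₂| on ℂ²⊗ℂ² with |ψ_i⟩ = cos θ_i|0⟩ + sin θ_i|1⟩ and any two-qubit state, B(p̄) > −1; equivalently, the 4×4 Bell operator M(θ₁,θ₂) + 1₄ is positive definite for all θ₁, θ₂ ∈ [0,2π). -/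
open Kronecker
open scoped ComplexOrder

/-- The projector `|1⟩⟨1|` on ℂ². -/
noncomputable def ketOneProj : Matrix (Fin 2) (Fin 2) ℂ := !![0, 0; 0, 1]

/-- The projector `|ψ⟩⟨ψ|` with `|ψ⟩ = cos θ |0⟩ + sin θ |1⟩`. -/
noncomputable def psiProj (θ : ℝ) : Matrix (Fin 2) (Fin 2) ℂ :=
  !![(Real.cos θ : ℂ) ^ 2, (Real.cos θ : ℂ) * (Real.sin θ : ℂ);
     (Real.cos θ : ℂ) * (Real.sin θ : ℂ), (Real.sin θ : ℂ) ^ 2]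

/-- Alice's measurement projectors `E₁ = |1⟩⟨1| ⊗ 1`, `E₁' = |ψ₁⟩⟨ψ₁| ⊗ 1`. -/
noncomputable def E1 : Matrix (Fin 2 × Fin 2) (Fin 2 × Fin 2) ℂ := ketOneProj ⊗ₖ 1
noncomputable def E1' (θ : ℝ) : Matrix (Fin 2 × Fin 2) (Fin 2 × Fin 2) ℂ := psiProj θ ⊗ₖ 1

/-- Bob's measurement projectors `E₂ = 1 ⊗ |1⟩⟨1|`, `E₂' = 1 ⊗ |ψ₂⟩⟨ψ₂|`. -/
noncomputable def E2 : Matrix (Fin 2 × Fin 2) (Fin 2 × Fin 2) ℂ :=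
  (1 : Matrix (Fin 2) (Fin 2) ℂ) ⊗ₖ ketOneProj
noncomputable def E2' (θ : ℝ) : Matrix (Fin 2 × Fin 2) (Fin 2 × Fin 2) ℂ :=
  (1 : Matrix (Fin 2) (Fin 2) ℂ) ⊗ₖ psiProj θ

/-- The Bell operator `M(θ₁,θ₂) = b̄ · (E₁, E₁', E₂, E₂', E₁E₂, E₁'E₂, E₁E₂', E₁'E₂')`
with `b̄ = (−30/31, 167/9, 167/9, −30/31, −174/11, −244/23, 74/11, −174/11)`. -/
noncomputable def BellOp (θ₁ θ₂ : ℝ) : Matrix (Fin 2 × Fin 2) (Fin 2 × Fin 2) ℂ :=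
  (-30/31 : ℂ) • E1 + (167/9 : ℂ) • E1' θ₁ + (167/9 : ℂ) • E2 + (-30/31 : ℂ) • E2' θ₂ +
    (-174/11 : ℂ) • (E1 * E2) + (-244/23 : ℂ) • (E1' θ₁ * E2) +
    (74/11 : ℂ) • (E1 * E2' θ₂) + (-174/11 : ℂ) • (E1' θ₁ * E2' θ₂)

/-!
Every entry of `M(θ₁,θ₂) + 1` is real, so it is the complexification of a real symmetric 4×4
matrix, and a real positive definite matrix stays positive definite over `ℂ` (split a complex
vector into its real and imaginary parts). The real matrix is positive definite by Sylvester's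
criterion. With `a = cos² θ₁`, `b = cos² θ₂`, each of its leading principal minors is a
polynomial in `(a, b)` of degree at most two in each variable, positive on the unit square.
Sylvester's criterion itself is proved by fraction-free elimination of the first row and column
(Chiò condensation), which multiplies the leading minors by powers of the pivot.
-/

open Matrix

namespace Matrix

section Sylvester

variable {R : Type*} [CommRing R] {n : ℕ}

/-- Chiò's condensation of `A` at the pivot `A 0 0`: the matrix of the `2 × 2` minors
containing the pivot. -/
def chioCondense (A : Matrix (Fin (n + 1)) (Fin (n + 1)) R) : Matrix (Fin n) (Fin n) R :=
  of fun i j => A 0 0 * A i.succ j.succ - A i.succ 0 * A 0 j.succ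

def leadingMinor (A : Matrix (Fin n) (Fin n) R) (k : ℕ) (hk : k ≤ n) : R :=
  (A.submatrix (Fin.castLE hk) (Fin.castLE hk)).det

theorem det_chioCondense (A : Matrix (Fin (n + 1)) (Fin (n + 1)) R) :
    A 0 0 * (chioCondense A).det = A 0 0 ^ n * A.det := by
  -- Scale rows `1, …, n` by the pivot, then clear the first column with row `0`.
  set d : Fin (n + 1) → R := Fin.cons 1 fun _ => A 0 0
  set c : Fin (n + 1) → R := Fin.cons 0 fun i => -A i.succ 0
  set D : Matrix (Fin (n + 1)) (Fin (n + 1)) R := of fun i j => d i * A i j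
  set C : Matrix (Fin (n + 1)) (Fin (n + 1)) R := of fun i j => D i j + c i * D 0 j
  have hD : D.det = A 0 0 ^ n * A.det := by
    simp [D, det_mul_column, Fin.prod_univ_succ, d]
  have hC : C.det = D.det :=
    det_eq_of_forall_row_eq_smul_add_const c 0 (by simp [c]) fun _ _ => rfl
  have hC' : C.det = A 0 0 * (chioCondense A).det := by
    rw [det_succ_column_zero, Fin.sum_univ_succ]
    have hcol (i : Fin n) : C i.succ 0 = 0 := by simp [C, D, c, d]; ring
    simp only [hcol, mul_zero, zero_mul, Finset.sum_const_zero, add_zero]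
    congr 1
    · simp [C, D, c, d]
    · congr 1; ext i j; simp [C, D, c, d, chioCondense]; ring
  rw [← hD, ← hC, hC']

theorem leadingMinor_chioCondense (A : Matrix (Fin (n + 1)) (Fin (n + 1)) R) (k : ℕ)
    (hk : k ≤ n) :
    A 0 0 * (chioCondense A).leadingMinor k hk =
      A 0 0 ^ k * A.leadingMinor (k + 1) (Nat.succ_le_succ hk) :=
  det_chioCondense
    (A.submatrix (Fin.castLE (Nat.succ_le_succ hk)) (Fin.castLE (Nat.succ_le_succ hk)))

variable [StarRing R] [TrivialStar R]

theorem isHermitian_chioCondense {A : Matrix (Fin (n + 1)) (Fin (n + 1)) R}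
    (hA : A.IsHermitian) : (chioCondense A).IsHermitian := by
  ext i j
  simp only [conjTranspose_apply, star_trivial, chioCondense, of_apply]
  rw [← hA.apply i.succ j.succ, ← hA.apply i.succ 0, ← hA.apply 0 j.succ]
  simp only [star_trivial]
  ring

theorem IsHermitian.mul_dotProduct_mulVec_eq_sq_add {A : Matrix (Fin (n + 1)) (Fin (n + 1)) R}
    (hA : A.IsHermitian) (x : Fin (n + 1) → R) :
    A 0 0 * (x ⬝ᵥ A *ᵥ x) =
      (∑ j, A 0 j * x j) ^ 2 + Fin.tail x ⬝ᵥ chioCondense A *ᵥ Fin.tail x := by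
  have hsymm (i : Fin n) : A i.succ 0 = A 0 i.succ := by simpa using (hA.apply i.succ 0).symm
  set T := ∑ j : Fin n, A 0 j.succ * x j.succ
  set Q := ∑ i : Fin n, ∑ j : Fin n, x i.succ * (A i.succ j.succ * x j.succ)
  have hquad : x ⬝ᵥ A *ᵥ x = A 0 0 * x 0 ^ 2 + 2 * x 0 * T + Q := by
    simp only [dotProduct, mulVec, Fin.sum_univ_succ, mul_add, Finset.mul_sum,
      Finset.sum_add_distrib]
    have hcol : ∑ i : Fin n, x i.succ * (A i.succ 0 * x 0) = x 0 * T := by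
      simp only [T, Finset.mul_sum, hsymm]
      exact Finset.sum_congr rfl fun i _ => by ring
    rw [hcol, ← Finset.mul_sum]
    ring
  have hchio : Fin.tail x ⬝ᵥ chioCondense A *ᵥ Fin.tail x = A 0 0 * Q - T ^ 2 := by
    simp only [dotProduct, mulVec, chioCondense, of_apply, Fin.tail, sq, Q, T,
      Finset.mul_sum, Finset.sum_mul, ← Finset.sum_sub_distrib, hsymm]
    exact Finset.sum_congr rfl fun i _ => Finset.sum_congr rfl fun j _ => by ring
  rw [hquad, hchio, Fin.sum_univ_succ]
  ring

variable [LinearOrder R] [IsStrictOrderedRing R]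

theorem PosDef.of_chioCondense {A : Matrix (Fin (n + 1)) (Fin (n + 1)) R} (hA : A.IsHermitian)
    (h₀ : 0 < A 0 0) (hS : (chioCondense A).PosDef) : A.PosDef := by
  refine posDef_iff_dotProduct_mulVec.mpr ⟨hA, fun x hx => ?_⟩
  rw [star_trivial]
  refine pos_of_mul_pos_right ?_ h₀.le
  rw [hA.mul_dotProduct_mulVec_eq_sq_add]
  by_cases htail : Fin.tail x = 0
  · have hx₀ : x 0 ≠ 0 := fun h => hx (by
      ext i; exact Fin.cases h (fun j => congrFun htail j) i)
    have hrow : ∑ j, A 0 j * x j = A 0 0 * x 0 := by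
      simp [Fin.sum_univ_succ, show ∀ j : Fin n, x j.succ = 0 from congrFun htail]
    rw [hrow, htail]
    simpa using pow_two_pos_of_ne_zero (mul_ne_zero h₀.ne' hx₀)
  · have := hS.dotProduct_mulVec_pos htail
    rw [star_trivial] at this
    positivity

theorem posDef_of_leadingMinor_pos {A : Matrix (Fin n) (Fin n) R} (hA : A.IsHermitian)
    (hminor : ∀ k (hk : k ≤ n), 0 < A.leadingMinor k hk) : A.PosDef := by
  induction n with
  | zero =>
    exact posDef_iff_dotProduct_mulVec.mpr ⟨hA, fun x hx => absurd (Subsingleton.elim x 0) hx⟩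
  | succ n ih =>
    have h₀ : 0 < A 0 0 := by simpa [leadingMinor, det_fin_one] using hminor 1 (by omega)
    refine PosDef.of_chioCondense hA h₀ (ih (isHermitian_chioCondense hA) fun k hk => ?_)
    refine pos_of_mul_pos_right ?_ h₀.le
    rw [leadingMinor_chioCondense]
    exact mul_pos (pow_pos h₀ k) (hminor _ _)

end Sylvester

section RCLike

variable {ι 𝕜 : Type*} [Fintype ι] [RCLike 𝕜]

theorem re_star_dotProduct_map_ofReal_mulVec (A : Matrix ι ι ℝ) (x : ι → 𝕜) :
    RCLike.re (star x ⬝ᵥ A.map (↑) *ᵥ x) =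
      (fun i => RCLike.re (x i)) ⬝ᵥ A *ᵥ (fun i => RCLike.re (x i)) +
        (fun i => RCLike.im (x i)) ⬝ᵥ A *ᵥ (fun i => RCLike.im (x i)) := by
  simp only [dotProduct, mulVec, map_sum, Pi.star_apply, RCLike.star_def, RCLike.mul_re,
    RCLike.conj_re, RCLike.conj_im, RCLike.mul_im, map_apply, RCLike.ofReal_re,
    RCLike.ofReal_im, Finset.mul_sum, ← Finset.sum_add_distrib]
  exact Finset.sum_congr rfl fun i _ => Finset.sum_congr rfl fun j _ => by ring

theorem PosDef.map_ofReal {A : Matrix ι ι ℝ} (hA : A.PosDef) :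
    (A.map ((↑) : ℝ → 𝕜)).PosDef := by
  have hH : (A.map ((↑) : ℝ → 𝕜)).IsHermitian := hA.isHermitian.map _ fun r => by simp
  refine posDef_iff_dotProduct_mulVec.mpr ⟨hH, fun x hx => RCLike.pos_iff.mpr
    ⟨?_, hH.im_star_dotProduct_mulVec_self x⟩⟩
  rw [re_star_dotProduct_map_ofReal_mulVec]
  have hre := hA.posSemidef.dotProduct_mulVec_nonneg (fun i => RCLike.re (x i))
  have him := hA.posSemidef.dotProduct_mulVec_nonneg (fun i => RCLike.im (x i))
  simp only [star_trivial] at hre him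
  by_cases hu : (fun i => RCLike.re (x i)) = 0
  · have hv : (fun i => RCLike.im (x i)) ≠ 0 := fun hv => hx (funext fun i =>
      RCLike.ext (by simpa using congrFun hu i) (by simpa using congrFun hv i))
    have := hA.dotProduct_mulVec_pos hv
    simp only [star_trivial] at this
    linarith
  · have := hA.dotProduct_mulVec_pos hu
    simp only [star_trivial] at this
    linarith

theorem PosDef.neg_one_lt_re_inner_toEuclideanLin [DecidableEq ι] {A : Matrix ι ι 𝕜}
    (hA : (A + 1).PosDef) {φ : EuclideanSpace 𝕜 ι} (hφ : ‖φ‖ = 1) :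
    -1 < RCLike.re (inner 𝕜 φ (A.toEuclideanLin φ)) := by
  have hφ₀ : φ.ofLp ≠ 0 := by
    rintro h
    simp [show φ = 0 by simpa using h] at hφ
  have hpos := hA.re_dotProduct_pos hφ₀
  have hdot : star φ.ofLp ⬝ᵥ (A + 1) *ᵥ φ.ofLp =
      inner 𝕜 φ (A.toEuclideanLin φ) + inner 𝕜 φ φ := by
    rw [← inner_add_right, EuclideanSpace.inner_eq_star_dotProduct, dotProduct_comm]
    simp [add_mulVec]
  rw [hdot, map_add, inner_self_eq_norm_sq, hφ] at hpos
  linarith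

end RCLike

end Matrix

/-- The real matrix of `M(θ₁,θ₂) + 1` in the basis `|00⟩, |01⟩, |10⟩, |11⟩`, written with
`cᵢ = cos θᵢ`, `sᵢ = sin θᵢ`. -/
noncomputable def bellGram (c₁ s₁ c₂ s₂ : ℝ) : Matrix (Fin 4) (Fin 4) ℝ :=
  !![1 + 167/9 * c₁^2 - 30/31 * c₂^2 - 174/11 * c₁^2 * c₂^2,
      -(30/31 + 174/11 * c₁^2) * c₂ * s₂,
      (167/9 - 174/11 * c₂^2) * c₁ * s₁,
      -174/11 * c₁ * s₁ * c₂ * s₂;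
    -(30/31 + 174/11 * c₁^2) * c₂ * s₂,
      176/9 + 1645/207 * c₁^2 - 30/31 * s₂^2 - 174/11 * c₁^2 * s₂^2,
      -174/11 * c₁ * s₁ * c₂ * s₂,
      (1645/207 - 174/11 * s₂^2) * c₁ * s₁;
    (167/9 - 174/11 * c₂^2) * c₁ * s₁,
      -174/11 * c₁ * s₁ * c₂ * s₂,
      1/31 + 167/9 * s₁^2 + 1964/341 * c₂^2 - 174/11 * s₁^2 * c₂^2,
      (1964/341 - 174/11 * s₁^2) * c₂ * s₂;
    -174/11 * c₁ * s₁ * c₂ * s₂,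
      (1645/207 - 174/11 * s₂^2) * c₁ * s₁,
      (1964/341 - 174/11 * s₁^2) * c₂ * s₂,
      8500/3069 + 1645/207 * s₁^2 + 1964/341 * s₂^2 - 174/11 * s₁^2 * s₂^2]

theorem bellOp_add_one_eq (θ₁ θ₂ : ℝ) :
    BellOp θ₁ θ₂ + 1 =
      ((bellGram (Real.cos θ₁) (Real.sin θ₁) (Real.cos θ₂) (Real.sin θ₂)).map (↑)).submatrix
        finProdFinEquiv finProdFinEquiv := by
  ext ⟨i, j⟩ ⟨k, l⟩
  fin_cases i <;> fin_cases j <;> fin_cases k <;> fin_cases l <;>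
    simp [BellOp, E1, E1', E2, E2', ← mul_kronecker_mul, ketOneProj, psiProj, bellGram,
      finProdFinEquiv, one_apply] <;> ring

theorem isHermitian_bellGram (c₁ s₁ c₂ s₂ : ℝ) : (bellGram c₁ s₁ c₂ s₂).IsHermitian := by
  ext i j
  fin_cases i <;> fin_cases j <;> simp [bellGram]

section UnitSquare

variable {a b : ℝ}

theorem bellGram_leadingMinor_one_poly_pos (ha : a ∈ Set.Icc (0 : ℝ) 1)
    (hb : b ∈ Set.Icc (0 : ℝ) 1) :
    0 < 1 + 167/9 * a - 30/31 * b - 174/11 * a * b := by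
  obtain ⟨ha₀, -⟩ := ha
  obtain ⟨-, hb₁⟩ := hb
  nlinarith [mul_nonneg ha₀ (sub_nonneg.mpr hb₁)]

theorem bellGram_leadingMinor_two_poly_pos (ha : a ∈ Set.Icc (0 : ℝ) 1)
    (hb : b ∈ Set.Icc (0 : ℝ) 1) :
    0 < 5186/279 + 214113169/635283 * a - 1670/93 * b - 6664558/23529 * a * b
        - 2993141/20493 * a^2 + 42456/253 * a^2 * b := by
  obtain ⟨ha₀, ha₁⟩ := ha
  obtain ⟨hb₀, hb₁⟩ := hb
  have ha' := sub_nonneg.mpr ha₁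
  have hb' := sub_nonneg.mpr hb₁
  nlinarith [mul_nonneg ha₀ hb₀, mul_nonneg ha₀ hb', mul_nonneg ha' hb₀, mul_nonneg ha' hb',
    mul_nonneg (mul_nonneg ha₀ ha₀) hb₀, mul_nonneg (mul_nonneg ha₀ ha₀) hb',
    mul_nonneg (mul_nonneg ha₀ ha') hb₀, mul_nonneg (mul_nonneg ha₀ ha') hb']

theorem bellGram_leadingMinor_three_poly_pos (ha : a ∈ Set.Icc (0 : ℝ) 1)
    (hb : b ∈ Set.Icc (0 : ℝ) 1) :
    0 < 26894596/77841 - 9454819598/19693773 * a - 148630760/285417 * b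
        + 29931410/211761 * a^2 + 621388913654/216631503 * a * b + 5728100/31713 * b^2
        - 8001114334/6988113 * a^2 * b - 16671185492/8023389 * a * b^2
        + 3141744/2783 * a^2 * b^2 := by
  obtain ⟨ha₀, ha₁⟩ := ha
  obtain ⟨hb₀, hb₁⟩ := hb
  have hab := mul_nonneg ha₀ hb₀
  have hab' := mul_nonneg ha₀ (sub_nonneg.mpr hb₁)
  have ha'b := mul_nonneg (sub_nonneg.mpr ha₁) hb₀
  have ha'b' := mul_nonneg (sub_nonneg.mpr ha₁) (sub_nonneg.mpr hb₁)
  nlinarith [mul_nonneg hab hab, mul_nonneg hab ha'b', mul_nonneg hab hab', mul_nonneg hab ha'b,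
    sq_nonneg (a - b), sq_nonneg (a + b - 1)]

theorem bellGram_leadingMinor_four_poly_pos (ha : a ∈ Set.Icc (0 : ℝ) 1)
    (hb : b ∈ Set.Icc (0 : ℝ) 1) :
    0 < 1248850565260/5494562667 + 25225984008520/20146729779 * (a + b)
        - 102664736300/72210501 * (a^2 + b^2) - 10079437772720204/664842082707 * a * b
        + 13643055839092/794315511 * a * b * (a + b) - 546663456/30613 * a^2 * b^2 := by
  obtain ⟨ha₀, ha₁⟩ := ha
  obtain ⟨hb₀, hb₁⟩ := hb
  have hab := mul_nonneg ha₀ hb₀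
  have hab' := mul_nonneg ha₀ (sub_nonneg.mpr hb₁)
  have ha'b := mul_nonneg (sub_nonneg.mpr ha₁) hb₀
  have ha'b' := mul_nonneg (sub_nonneg.mpr ha₁) (sub_nonneg.mpr hb₁)
  nlinarith [mul_nonneg hab hab, mul_nonneg hab ha'b', mul_nonneg hab hab', mul_nonneg hab ha'b,
    sq_nonneg (a - b), sq_nonneg (a + b - 1)]

end UnitSquare

theorem sq_mem_Icc_of_sq_add_sq_eq_one {c s : ℝ} (h : c^2 + s^2 = 1) :
    c^2 ∈ Set.Icc (0 : ℝ) 1 :=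
  ⟨sq_nonneg c, h ▸ le_add_of_nonneg_right (sq_nonneg s)⟩

theorem leadingMinor_bellGram_pos {c₁ s₁ c₂ s₂ : ℝ} (h₁ : c₁^2 + s₁^2 = 1)
    (h₂ : c₂^2 + s₂^2 = 1) (k : ℕ) (hk : k ≤ 4) :
    0 < (bellGram c₁ s₁ c₂ s₂).leadingMinor k hk := by
  have ha := sq_mem_Icc_of_sq_add_sq_eq_one h₁
  have hb := sq_mem_Icc_of_sq_add_sq_eq_one h₂
  interval_cases k
  · simp [leadingMinor]
  · convert bellGram_leadingMinor_one_poly_pos ha hb using 1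
    simp [leadingMinor, bellGram]
  · convert bellGram_leadingMinor_two_poly_pos ha hb using 1
    simp [leadingMinor, det_fin_two, bellGram]
    grind
  · convert bellGram_leadingMinor_three_poly_pos ha hb using 1
    simp [leadingMinor, det_fin_three, bellGram]
    grind
  · convert bellGram_leadingMinor_four_poly_pos ha hb using 1
    simp [leadingMinor, det_succ_row_zero, Fin.sum_univ_succ, bellGram, Fin.succAbove]
    grind

theorem posDef_bellOp_add_one (θ₁ θ₂ : ℝ) : (BellOp θ₁ θ₂ + 1).PosDef := by
  rw [bellOp_add_one_eq]
  refine (PosDef.map_ofReal ?_).submatrix finProdFinEquiv.injective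
  exact posDef_of_leadingMinor_pos (isHermitian_bellGram _ _ _ _)
    (leadingMinor_bellGram_pos (Real.cos_sq_add_sin_sq θ₁) (Real.cos_sq_add_sin_sq θ₂))

/-- for all angles `θ₁, θ₂`, the Bell operator satisfies `M(θ₁,θ₂) + 1 > 0`
(positive definite); consequently, for every normalized two-qubit state `φ`, the value of
the Bell functional `B(p̄) = ⟨φ|M(θ₁,θ₂)|φ⟩` on the distribution generated by the
projectors `E₁, E₁', E₂, E₂'` exceeds `−1`. -/
theorem bell_operator_quantum_bound :
    ∀ θ₁ θ₂ : ℝ,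
      (BellOp θ₁ θ₂ + 1).PosDef ∧
        ∀ φ : EuclideanSpace ℂ (Fin 2 × Fin 2), ‖φ‖ = 1 →
          -1 < ((inner ℂ φ ((Matrix.toEuclideanLin (BellOp θ₁ θ₂)) φ) : ℂ)).re :=
  fun θ₁ θ₂ => ⟨posDef_bellOp_add_one θ₁ θ₂,
    fun _ hφ => (posDef_bellOp_add_one θ₁ θ₂).neg_one_lt_re_inner_toEuclideanLin hφ⟩
end
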